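/- arXiv:math/0405122 — 6 statements merged into one kernel-verified Lean document; each statement's English description precedes it below -/
import Mathlib

section
/- If Γ₁ and Γ₂ are finite groups of coprime order, then for any finitely generated group G the number of surjective homomorphisms satisfies |Epi(G, Γ₁ × Γ₂)| = |Epi(G,Γ₁)| · |Epi(G,Γ₂)|. -/
lemma prod_surjective_of_coprime {G Γ₁ Γ₂ : Type*} [Group G] [Group Γ₁] [Finite Γ₁]
    [Group Γ₂] [Finite Γ₂] (hco : Nat.Coprime (Nat.card Γ₁) (Nat.card Γ₂))
    {f : G →* Γ₁} {g : G →* Γ₂} (hf : Function.Surjective f) (hg : Function.Surjective g) :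
    Function.Surjective (f.prod g) := by
  rw [← MonoidHom.range_eq_top]
  set H := (f.prod g).range
  have h1 : Nat.card Γ₁ ∣ Nat.card H := by
    have hs : Function.Surjective ((MonoidHom.fst Γ₁ Γ₂).comp H.subtype) := by
      intro x
      obtain ⟨y, hy⟩ := hf x
      exact ⟨⟨(f.prod g) y, ⟨y, rfl⟩⟩, hy⟩
    have := Subgroup.card_eq_card_quotient_mul_card_subgroup
      ((MonoidHom.fst Γ₁ Γ₂).comp H.subtype).ker
    rw [Nat.card_congr (QuotientGroup.quotientKerEquivOfSurjective _ hs).toEquiv] at this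
    exact ⟨_, this⟩
  have h2 : Nat.card Γ₂ ∣ Nat.card H := by
    have hs : Function.Surjective ((MonoidHom.snd Γ₁ Γ₂).comp H.subtype) := by
      intro x
      obtain ⟨y, hy⟩ := hg x
      exact ⟨⟨(f.prod g) y, ⟨y, rfl⟩⟩, hy⟩
    have := Subgroup.card_eq_card_quotient_mul_card_subgroup
      ((MonoidHom.snd Γ₁ Γ₂).comp H.subtype).ker
    rw [Nat.card_congr (QuotientGroup.quotientKerEquivOfSurjective _ hs).toEquiv] at this
    exact ⟨_, this⟩
  have hdvd : Nat.card (Γ₁ × Γ₂) ∣ Nat.card H := by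
    rw [Nat.card_prod]
    exact hco.mul_dvd_of_dvd_of_dvd h1 h2
  have hle : Nat.card (Γ₁ × Γ₂) ≤ Nat.card H :=
    Nat.le_of_dvd Nat.card_pos hdvd
  exact Subgroup.eq_top_of_le_card H hle

/-- If `Γ₁` and `Γ₂` are finite groups of coprime orders, then for any finitely generated
group `G`, `|Epi(G, Γ₁ × Γ₂)| = |Epi(G, Γ₁)| ⬝ |Epi(G, Γ₂)|`. -/
theorem card_epi_prod_of_coprime
    (G Γ₁ Γ₂ : Type*) [Group G] [Group.FG G] [Group Γ₁] [Finite Γ₁] [Group Γ₂] [Finite Γ₂]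
    (hco : Nat.Coprime (Nat.card Γ₁) (Nat.card Γ₂)) :
    Nat.card {ρ : G →* Γ₁ × Γ₂ // Function.Surjective ρ} =
      Nat.card {ρ : G →* Γ₁ // Function.Surjective ρ} *
        Nat.card {ρ : G →* Γ₂ // Function.Surjective ρ} := by
  rw [← Nat.card_prod]
  apply Nat.card_congr
  refine
    { toFun := fun ρ => ⟨⟨(MonoidHom.fst Γ₁ Γ₂).comp ρ.1, Prod.fst_surjective.comp ρ.2⟩,
        ⟨(MonoidHom.snd Γ₁ Γ₂).comp ρ.1, Prod.snd_surjective.comp ρ.2⟩⟩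
      invFun := fun p => ⟨(p.1.1).prod (p.2.1), prod_surjective_of_coprime hco p.1.2 p.2.2⟩
      left_inv := fun ρ => by ext x <;> rfl
      right_inv := fun p => by
        refine Prod.ext ?_ ?_ <;> exact Subtype.ext (by ext x; rfl) }
end

section
/- Let G be a finitely generated group and Γ = A ×_{σ,χ} B a finite extension with A abelian. Then |Hom(G,Γ)| = Σ_{ρ ∈ Hom(G,B)} ε_χ(ρ) · |Z¹_{σρ}(G,A)|, where ε_χ(ρ) = 1 if some 1-cochain f : G → A satisfies δ¹f = −ρ*χ, and ε_χ(ρ) = 0 otherwise. -/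
/-- `AddAut A` is now an additive group; the old multiplicative group of additive
automorphisms is `Multiplicative (AddAut A)`, applied to elements of `A` through this coercion. -/
instance {A : Type*} [AddCommGroup A] : CoeFun (Multiplicative (AddAut A)) (fun _ => A → A) :=
  ⟨fun f => ⇑(Multiplicative.toAdd f : AddAut A)⟩

/-- The underlying type of the extension `A ×_{σ,χ} B` of a group `B` by an abelian
group `A`, with monodromy `σ : B → Aut(A)` and `2`-cocycle `χ : B × B → A`. -/
@[ext] structure CocycleExtension {A B : Type*} [AddCommGroup A] [Group B]
    (σ : B →* Multiplicative (AddAut A)) (χ : B → B → A) where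
  fst : A
  snd : B

/-- `χ` is a normalized `2`-cocycle for the action `σ`. -/
class IsNormalizedCocycle {A B : Type*} [AddCommGroup A] [Group B]
    (σ : B →* Multiplicative (AddAut A)) (χ : B → B → A) : Prop where
  cocycle : ∀ b₁ b₂ b₃ : B,
    χ b₁ b₂ + χ (b₁ * b₂) b₃ = σ b₁ (χ b₂ b₃) + χ b₁ (b₂ * b₃)
  one_left : ∀ b : B, χ 1 b = 0
  one_right : ∀ b : B, χ b 1 = 0

namespace CocycleExtension

variable {A B : Type*} [AddCommGroup A] [Group B]
  (σ : B →* Multiplicative (AddAut A)) (χ : B → B → A) [h : IsNormalizedCocycle σ χ]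

/-- The group `A ×_{σ,χ} B`, with multiplication
`(a₁,b₁)(a₂,b₂) = (a₁ + σ_{b₁}(a₂) + χ(b₁,b₂), b₁b₂)`. -/
instance : Group (CocycleExtension σ χ) where
  mul p q := ⟨p.fst + σ p.snd q.fst + χ p.snd q.snd, p.snd * q.snd⟩
  one := ⟨0, 1⟩
  inv p := ⟨-(σ p.snd⁻¹ p.fst) - χ p.snd⁻¹ p.snd, p.snd⁻¹⟩
  mul_assoc p q r := by
    have key := h.cocycle p.snd q.snd r.snd
    ext
    · show p.fst + σ p.snd q.fst + χ p.snd q.snd + σ (p.snd * q.snd) r.fst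
          + χ (p.snd * q.snd) r.snd
        = p.fst + σ p.snd (q.fst + σ q.snd r.fst + χ q.snd r.snd)
          + χ p.snd (q.snd * r.snd)
      calc p.fst + σ p.snd q.fst + χ p.snd q.snd + σ (p.snd * q.snd) r.fst
            + χ (p.snd * q.snd) r.snd
          = p.fst + σ p.snd q.fst + σ p.snd (σ q.snd r.fst)
            + (χ p.snd q.snd + χ (p.snd * q.snd) r.snd) := by
            simp only [map_mul, toAdd_mul, AddAut.add_apply]; abel
        _ = p.fst + σ p.snd q.fst + σ p.snd (σ q.snd r.fst)
            + (σ p.snd (χ q.snd r.snd) + χ p.snd (q.snd * r.snd)) := by rw [key]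
        _ = p.fst + σ p.snd (q.fst + σ q.snd r.fst + χ q.snd r.snd)
            + χ p.snd (q.snd * r.snd) := by
            simp only [map_add]; abel
    · show p.snd * q.snd * r.snd = p.snd * (q.snd * r.snd)
      exact mul_assoc _ _ _
  one_mul p := by
    ext
    · show 0 + σ 1 p.fst + χ 1 p.snd = p.fst
      simp [h.one_left]
    · show 1 * p.snd = p.snd
      exact one_mul _
  mul_one p := by
    ext
    · show p.fst + σ p.snd 0 + χ p.snd 1 = p.fst
      simp [h.one_right]
    · show p.snd * 1 = p.snd
      exact mul_one _
  inv_mul_cancel p := by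
    ext
    · show -(σ p.snd⁻¹ p.fst) - χ p.snd⁻¹ p.snd + σ p.snd⁻¹ p.fst + χ p.snd⁻¹ p.snd = 0
      abel
    · show p.snd⁻¹ * p.snd = 1
      exact inv_mul_cancel _

/-- The canonical projection `A ×_{σ,χ} B → B`. -/
def proj : CocycleExtension σ χ →* B where
  toFun p := p.snd
  map_one' := rfl
  map_mul' _ _ := rfl

end CocycleExtension

/-! Composing with the projection `Γ → B` sorts `Hom(G, Γ)` into fibres over
`Hom(G, B)`. A lift of `ρ` is `g ↦ (f g, ρ g)` for a `1`-cochain `f` with `δ¹f = -ρ*χ`, and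
the set of such cochains is either empty or a torsor under `Z¹_{σρ}(G, A)`. -/

instance MonoidHom.finite_of_fg {M N : Type*} [Monoid M] [Monoid.FG M] [Monoid N] [Finite N] :
    Finite (M →* N) := by
  obtain ⟨S, hS, hSfin⟩ := Monoid.fg_iff.mp ‹Monoid.FG M›
  have := hSfin.to_subtype
  exact Finite.of_injective (fun φ : M →* N => fun s : S => φ s)
    fun φ ψ h => MonoidHom.eq_of_eqOn_denseM hS fun x hx => congrFun h ⟨x, hx⟩

theorem Nat.card_eq_finsum_card_fiber {α β : Type*} [Finite α] [Finite β] (f : α → β) :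
    Nat.card α = ∑ᶠ b, Nat.card {a // f a = b} := by
  have := Fintype.ofFinite β
  rw [finsum_eq_sum_of_fintype, ← Nat.card_sigma, Nat.card_congr (Equiv.sigmaFiberEquiv f)]

namespace CocycleExtension

variable {A B : Type*} [AddCommGroup A] [Group B]
  (σ : B →* Multiplicative (AddAut A)) (χ : B → B → A)

def equivProd : CocycleExtension σ χ ≃ A × B where
  toFun p := (p.fst, p.snd)
  invFun q := ⟨q.1, q.2⟩
  left_inv _ := rfl
  right_inv _ := rfl

instance [Finite A] [Finite B] : Finite (CocycleExtension σ χ) :=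
  .of_equiv _ (equivProd σ χ).symm

/-- `Z¹_{σρ}(G, A)`. -/
def twistedCocycles {G : Type*} [Mul G] (ρ : G → B) : Set (G → A) :=
  {f | ∀ g h, f (g * h) = f g + σ (ρ g) (f h)}

/-- The `1`-cochains `f : G → A` with `δ¹f = -ρ*χ`. -/
def liftCochains {G : Type*} [Mul G] (ρ : G → B) : Set (G → A) :=
  {f | ∀ g h, f (g * h) = f g + σ (ρ g) (f h) + χ (ρ g) (ρ h)}

def liftCochainsEquivTwistedCocycles {G : Type*} [Mul G] {ρ : G → B} {f₀ : G → A}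
    (hf₀ : f₀ ∈ liftCochains σ χ ρ) : liftCochains σ χ ρ ≃ twistedCocycles σ ρ where
  toFun f := ⟨f.1 - f₀, fun g h => by
    simp only [Pi.sub_apply, f.2 g h, hf₀ g h, map_sub]
    abel⟩
  invFun f := ⟨f.1 + f₀, fun g h => by
    simp only [Pi.add_apply, f.2 g h, hf₀ g h, map_add]
    abel⟩
  left_inv f := Subtype.ext (sub_add_cancel f.1 f₀)
  right_inv f := Subtype.ext (add_sub_cancel_right f.1 f₀)

open Classical in
theorem card_liftCochains {G : Type*} [Mul G] (ρ : G → B) :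
    Nat.card (liftCochains σ χ ρ) =
      (if (liftCochains σ χ ρ).Nonempty then 1 else 0) * Nat.card (twistedCocycles σ ρ) := by
  split_ifs with h
  · obtain ⟨f₀, hf₀⟩ := h
    rw [one_mul, Nat.card_congr (liftCochainsEquivTwistedCocycles σ χ hf₀)]
  · rw [zero_mul, Set.not_nonempty_iff_eq_empty.mp h, Nat.card_of_isEmpty]

variable [IsNormalizedCocycle σ χ]

def liftsEquivLiftCochains {G : Type*} [Monoid G] (ρ : G →* B) :
    {φ : G →* CocycleExtension σ χ // (proj σ χ).comp φ = ρ} ≃ liftCochains σ χ ρ where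
  toFun φ := ⟨fun g => (φ.1 g).fst, fun g h => by
    obtain ⟨φ, rfl⟩ := φ
    exact congrArg fst (map_mul φ g h)⟩
  invFun f :=
    ⟨{ toFun g := ⟨f.1 g, ρ g⟩
       map_one' := by
         have h₁ := f.2 1 1
         simp only [one_mul, map_one, toAdd_one, AddAut.zero_apply,
           IsNormalizedCocycle.one_left (σ := σ), add_zero] at h₁
         exact CocycleExtension.ext (left_eq_add.mp h₁) (map_one ρ)
       map_mul' g h := CocycleExtension.ext (f.2 g h) (map_mul ρ g h) }, rfl⟩
  left_inv φ := Subtype.ext <| MonoidHom.ext fun g =>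
    CocycleExtension.ext rfl (DFunLike.congr_fun φ.2 g).symm
  right_inv _ := rfl

end CocycleExtension

open CocycleExtension

open Classical in
/-- For a finitely generated group `G` and a finite extension `Γ = A ×_{σ,χ} B` with `A`
abelian, `|Hom(G,Γ)| = ∑_{ρ ∈ Hom(G,B)} ε_χ(ρ) ⬝ |Z¹_{σρ}(G,A)|`, where `ε_χ(ρ) = 1` if
some `1`-cochain `f : G → A` satisfies `δ¹f = -ρ*χ` (i.e.
`f(gh) = f(g) + σ_{ρ(g)}(f(h)) + χ(ρ(g),ρ(h))`), and `ε_χ(ρ) = 0` otherwise. -/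
theorem card_hom_cocycleExtension
    {A B : Type*} [AddCommGroup A] [Finite A] [Group B] [Finite B]
    (σ : B →* Multiplicative (AddAut A)) (χ : B → B → A) [IsNormalizedCocycle σ χ]
    (G : Type*) [Group G] [Group.FG G] :
    Nat.card (G →* CocycleExtension σ χ) =
      ∑ᶠ ρ : G →* B,
        (if ∃ f : G → A, ∀ g h : G,
            f (g * h) = f g + σ (ρ g) (f h) + χ (ρ g) (ρ h) then 1 else 0) *
          Nat.card {f : G → A // ∀ g h : G, f (g * h) = f g + σ (ρ g) (f h)} := by
  rw [Nat.card_eq_finsum_card_fiber fun φ : G →* CocycleExtension σ χ => (proj σ χ).comp φ]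
  refine finsum_congr fun ρ => ?_
  rw [Nat.card_congr (liftsEquivLiftCochains σ χ ρ)]
  exact card_liftCochains σ χ ρ
end

section
/- The number of surjective homomorphisms from the free group F_n onto the dihedral group D_{2m} of order 2m is (2^n − 1) · m^n · Π_{i=1}^{r} (1 − q_i^{1−n}), where q_1,…,q_r are the distinct prime divisors of m. -/
/-!
A surjection `F_n → D_{2m}` is a generating `n`-tuple of `D_{2m}`. The rotations form a proper
subgroup, so a generating tuple contains a reflection, say `sr b` at position `i₀`. Writing every
element as `r a` or `sr b * r a`, the tuple generates iff the rotation parts `a` of the other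
entries generate `ZMod m`, i.e. form a unimodular `(n - 1)`-tuple. Hence each of the `2^n - 1`
nonzero reflection patterns contributes `m · J_{n-1}(m)`, where `J_k(m)` counts unimodular
`k`-tuples over `ZMod m`. By the Chinese remainder theorem `J_k` is multiplicative, and since
`ZMod (p^(e+1))` is local, `J_k(p^(e+1)) = p^((e+1)k) - p^(ek)`; so
`J_k(m) = m^k ∏_{p ∣ m} (1 - p^(-k))`.
-/

def unimodularTuples (ι R : Type*) [CommSemiring R] : Set (ι → R) :=
  {c | Ideal.span (Set.range c) = ⊤}

section Unimodular

variable {ι R S T : Type*} [CommRing R] [CommRing S] [CommRing T]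

theorem mem_unimodularTuples_prod_iff (c : ι → S × T) :
    c ∈ unimodularTuples ι (S × T) ↔
      Prod.fst ∘ c ∈ unimodularTuples ι S ∧ Prod.snd ∘ c ∈ unimodularTuples ι T := by
  simp only [unimodularTuples, Set.mem_ofPred_eq, Set.range_comp]
  conv_lhs => rw [Ideal.ideal_prod_eq (Ideal.span _), Ideal.prod_eq_top_iff, Ideal.map_span,
    Ideal.map_span]
  rfl

theorem ringEquiv_comp_mem_unimodularTuples_iff (e : R ≃+* S) (c : ι → R) :
    e ∘ c ∈ unimodularTuples ι S ↔ c ∈ unimodularTuples ι R := by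
  simp only [unimodularTuples, Set.mem_ofPred_eq, Set.range_comp]
  rw [← Ideal.map_span, ← Ideal.comap_symm, Ideal.comap_eq_top_iff]

theorem mem_unimodularTuples_iff_exists_isUnit [IsLocalRing R] (c : ι → R) :
    c ∈ unimodularTuples ι R ↔ ∃ i, IsUnit (c i) := by
  refine ⟨fun hc => ?_, fun ⟨i, hi⟩ =>
    Ideal.eq_top_of_isUnit_mem _ (Ideal.subset_span ⟨i, rfl⟩) hi⟩
  by_contra! h
  have : Ideal.span (Set.range c) ≤ IsLocalRing.maximalIdeal R := by
    rw [Ideal.span_le]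
    rintro _ ⟨i, rfl⟩
    exact h i
  exact (IsLocalRing.maximalIdeal.isMaximal R).ne_top (top_le_iff.mp (hc ▸ this))

theorem card_unimodularTuples_congr {κ : Type*} (e : ι ≃ κ) :
    Nat.card (unimodularTuples ι R) = Nat.card (unimodularTuples κ R) :=
  Nat.card_congr <| (Equiv.arrowCongr e (.refl R)).subtypeEquiv fun c => by
    show _ ↔ Ideal.span (Set.range (c ∘ e.symm)) = ⊤
    rw [EquivLike.range_comp]
    rfl

theorem card_unimodularTuples_of_ringEquiv_prod (e : R ≃+* S × T) :
    Nat.card (unimodularTuples ι R) =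
      Nat.card (unimodularTuples ι S) * Nat.card (unimodularTuples ι T) := by
  rw [← Nat.card_prod]
  refine Nat.card_congr ((Equiv.subtypeEquiv ((Equiv.arrowCongr (.refl ι) e.toEquiv).trans
    (Equiv.arrowProdEquivProdArrow _ _ _)) fun c => ?_).trans Equiv.subtypeProdEquivProd)
  rw [← ringEquiv_comp_mem_unimodularTuples_iff e, mem_unimodularTuples_prod_iff]
  rfl

theorem card_nonunits_add_card_units [Finite R] :
    Nat.card (nonunits R) + Nat.card Rˣ = Nat.card R := by
  rw [Nat.card_congr (Equiv.ofInjective _ Units.val_injective), Nat.card_coe_set_eq,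
    Nat.card_coe_set_eq, add_comm]
  convert Set.ncard_add_ncard_compl (Set.range ((↑) : Rˣ → R))
  ext x
  simp [mem_nonunits_iff, IsUnit]

theorem card_unimodularTuples_of_isLocalRing [Fintype ι] [Finite R] [IsLocalRing R] :
    Nat.card (unimodularTuples ι R) =
      Nat.card R ^ Fintype.card ι - Nat.card (nonunits R) ^ Fintype.card ι := by
  have hcompl : (unimodularTuples ι R)ᶜ = Set.univ.pi fun _ => nonunits R := by
    ext c
    simp [mem_unimodularTuples_iff_exists_isUnit, mem_nonunits_iff]
  have hsum := Set.ncard_add_ncard_compl (unimodularTuples ι R)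
  simp only [hcompl, ← Nat.card_coe_set_eq] at hsum
  rw [Nat.card_congr (Equiv.Set.univPi _), Nat.card_pi, Finset.prod_const, Finset.card_univ,
    Nat.card_fun, Nat.card_eq_fintype_card (α := ι)] at hsum
  omega

end Unimodular

theorem ZMod.isLocalRing_prime_pow {p : ℕ} [Fact p.Prime] {k : ℕ} (hk : k ≠ 0) :
    IsLocalRing (ZMod (p ^ k)) :=
  have : Nontrivial (ZMod (p ^ k)) := ZMod.nontrivial_iff.mpr
    (Nat.pow_eq_one.not.mpr (by simp [(Fact.out : p.Prime).ne_one, hk]))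
  IsLocalRing.of_surjective' (PadicInt.toZModPow k) (ZMod.ringHom_surjective _)

theorem ZMod.card_nonunits_prime_pow {p : ℕ} (hp : p.Prime) (e : ℕ) :
    Nat.card (nonunits (ZMod (p ^ (e + 1)))) = p ^ e := by
  have : NeZero (p ^ (e + 1)) := ⟨pow_ne_zero _ hp.ne_zero⟩
  have h := card_nonunits_add_card_units (R := ZMod (p ^ (e + 1)))
  rw [Nat.card_eq_fintype_card (α := (ZMod _)ˣ), ZMod.card_units_eq_totient,
    Nat.totient_prime_pow_succ hp, Nat.card_zmod, Nat.mul_sub_one, ← pow_succ] at h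
  have : p ^ e ≤ p ^ (e + 1) := Nat.pow_le_pow_right hp.pos e.le_succ
  omega

theorem ZMod.closure_eq_top_iff_span_eq_top {m : ℕ} (s : Set (ZMod m)) :
    AddSubgroup.closure s = ⊤ ↔ Ideal.span s = ⊤ := by
  rw [← Submodule.span_int_eq_addSubgroupClosure, Submodule.toAddSubgroup_eq_top,
    ← Submodule.restrictScalars_span ℤ (ZMod m) ZMod.intCast_surjective,
    Submodule.restrictScalars_eq_top_iff]

section ZModCount

variable {ι : Type*} [Fintype ι]

theorem card_unimodularTuples_zmod_prime_pow {p : ℕ} (hp : p.Prime) (e : ℕ) :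
    Nat.card (unimodularTuples ι (ZMod (p ^ (e + 1)))) =
      (p ^ (e + 1)) ^ Fintype.card ι - (p ^ e) ^ Fintype.card ι := by
  have : Fact p.Prime := ⟨hp⟩
  have := ZMod.isLocalRing_prime_pow (p := p) e.succ_ne_zero
  have : NeZero (p ^ (e + 1)) := ⟨pow_ne_zero _ hp.ne_zero⟩
  rw [card_unimodularTuples_of_isLocalRing, ZMod.card_nonunits_prime_pow hp, Nat.card_zmod]

theorem card_unimodularTuples_zmod {m : ℕ} (hm : m ≠ 0) :
    (Nat.card (unimodularTuples ι (ZMod m)) : ℚ) =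
      m ^ Fintype.card ι * ∏ p ∈ m.primeFactors, (1 - ((p : ℚ) ^ Fintype.card ι)⁻¹) := by
  induction m using Nat.recOnPosPrimePosCoprime with
  | zero => exact absurd rfl hm
  | one =>
    have : unimodularTuples ι (ZMod 1) = Set.univ :=
      Set.eq_univ_of_forall fun _ => Subsingleton.elim _ _
    simp [this]
  | prime_pow p e hp he =>
    obtain ⟨e, rfl⟩ := Nat.exists_eq_add_of_lt he
    rw [zero_add, card_unimodularTuples_zmod_prime_pow hp,
      Nat.primeFactors_prime_pow e.succ_ne_zero hp, Finset.prod_singleton,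
      Nat.cast_sub (Nat.pow_le_pow_left (Nat.pow_le_pow_right hp.pos (Nat.le_add_right e 1)) _)]
    have : (p : ℚ) ≠ 0 := by exact_mod_cast hp.ne_zero
    push_cast
    field_simp
    ring
  | coprime a b ha hb hab iha ihb =>
    rw [card_unimodularTuples_of_ringEquiv_prod (ZMod.chineseRemainder hab), Nat.cast_mul,
      iha (by omega), ihb (by omega), hab.primeFactors_mul,
      Finset.prod_union hab.disjoint_primeFactors]
    push_cast
    ring

end ZModCount

theorem FreeGroup.card_surjective_monoidHom {ι G : Type*} [Group G] :
    Nat.card {ρ : FreeGroup ι →* G // Function.Surjective ρ} =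
      Nat.card {g : ι → G // Subgroup.closure (Set.range g) = ⊤} :=
  (Nat.card_congr (FreeGroup.lift.subtypeEquiv fun g => by
    rw [← MonoidHom.range_eq_top, FreeGroup.range_lift_eq_closure])).symm

namespace DihedralGroup

variable {n : ℕ}

def ofBoolProd : Bool × ZMod n ≃ DihedralGroup n :=
  (Equiv.boolProdEquivSum _).trans equivSum.symm

@[simp] theorem ofBoolProd_false (a : ZMod n) : ofBoolProd (false, a) = r a := rfl

@[simp] theorem ofBoolProd_true (a : ZMod n) : ofBoolProd (true, a) = sr a := rfl

/-- Every `x` is `r (rotationPart b x)` or `sr b * r (rotationPart b x)`. -/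
def rotationPart (b : ZMod n) : DihedralGroup n → ZMod n
  | r a => a
  | sr a => a - b

/-- The subgroup generated by `sr b` and the rotations `r a`, `a ∈ A`. -/
def affineSubgroup (A : AddSubgroup (ZMod n)) (b : ZMod n) : Subgroup (DihedralGroup n) where
  carrier := {x | rotationPart b x ∈ A}
  one_mem' := A.zero_mem
  mul_mem' := by
    rintro (x | x) (y | y) hx hy <;> simp only [Set.mem_ofPred_eq, rotationPart, r_mul_r,
      r_mul_sr, sr_mul_r, sr_mul_sr] at hx hy ⊢
    · exact A.add_mem hx hy
    · simpa [sub_sub_eq_add_sub, sub_right_comm] using A.sub_mem hy hx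
    · simpa [add_sub_right_comm] using A.add_mem hx hy
    · simpa using A.sub_mem hy hx
  inv_mem' := by
    rintro (x | x) hx
    · exact A.neg_mem hx
    · exact hx

theorem r_mem_zpowers_r_one (a : ZMod n) : r a ∈ Subgroup.zpowers (r 1 : DihedralGroup n) :=
  ⟨(a.cast : ℤ), by simp⟩

theorem sr_notMem_zpowers_r_one (a : ZMod n) :
    sr a ∉ Subgroup.zpowers (r 1 : DihedralGroup n) := by
  rintro ⟨k, hk⟩
  simp at hk

theorem closure_range_r_ne_top {ι : Type*} (a : ι → ZMod n) :
    Subgroup.closure (Set.range fun i => r (a i)) ≠ ⊤ := by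
  intro h
  have hle : Subgroup.closure (Set.range fun i => r (a i)) ≤ Subgroup.zpowers (r 1) := by
    rw [Subgroup.closure_le]
    rintro _ ⟨i, rfl⟩
    exact r_mem_zpowers_r_one (a i)
  rw [h] at hle
  exact sr_notMem_zpowers_r_one 0 (hle (Subgroup.mem_top _))

theorem closure_range_eq_top_iff {ι : Type*} (g : ι → DihedralGroup n) {i₀ : ι} {b : ZMod n}
    (hb : g i₀ = sr b) :
    Subgroup.closure (Set.range g) = ⊤ ↔
      AddSubgroup.closure (Set.range fun i : {i // i ≠ i₀} => rotationPart b (g i)) = ⊤ := by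
  set A := AddSubgroup.closure (Set.range fun i : {i // i ≠ i₀} => rotationPart b (g i))
  set H := Subgroup.closure (Set.range g)
  constructor
  · intro hH
    have hle : H ≤ affineSubgroup A b := by
      rw [Subgroup.closure_le]
      rintro _ ⟨i, rfl⟩
      by_cases hi : i = i₀
      · subst hi
        simp [affineSubgroup, hb, rotationPart, A.zero_mem]
      · exact AddSubgroup.subset_closure ⟨⟨i, hi⟩, rfl⟩
    rw [eq_top_iff]
    intro a _
    simpa [affineSubgroup, rotationPart] using hle (hH ▸ Subgroup.mem_top (r a))
  · intro hA
    have hsr : sr b ∈ H := hb ▸ Subgroup.subset_closure ⟨i₀, rfl⟩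
    have hr : ∀ a, r a ∈ H := by
      intro a
      induction (hA ▸ AddSubgroup.mem_top a : a ∈ A) using AddSubgroup.closure_induction with
      | mem _ hx =>
        obtain ⟨i, rfl⟩ := hx
        have hi : g i ∈ H := Subgroup.subset_closure ⟨i, rfl⟩
        simp only [rotationPart]
        rcases hgi : g i with c | c <;> rw [hgi] at hi
        · exact hi
        · simpa [sr_mul_sr] using H.mul_mem hsr hi
      | zero => exact r_zero (n := n) ▸ H.one_mem
      | add x y _ _ hx hy => exact r_mul_r x y ▸ H.mul_mem hx hy
      | neg x _ hx => exact inv_r x ▸ H.inv_mem hx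
    rw [eq_top_iff]
    rintro (a | a) _
    · exact hr a
    · simpa [r_mul_sr] using H.mul_mem (hr (b - a)) hsr

theorem card_closure_range_ofBoolProd_eq_top {ι : Type*} [DecidableEq ι] [NeZero n]
    (s : ι → Bool) {i₀ : ι} (hi₀ : s i₀ = true) :
    Nat.card {a : ι → ZMod n //
        Subgroup.closure (Set.range fun i => ofBoolProd (s i, a i)) = ⊤} =
      n * Nat.card {c : {i // i ≠ i₀} → ZMod n //
        AddSubgroup.closure (Set.range c) = ⊤} := by
  have hpart : ∀ (t : ZMod n) (i : ι) (x : ZMod n),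
      rotationPart t (ofBoolProd (s i, x)) = x - if s i then t else 0 := by
    intro t i x
    cases s i <;> simp [rotationPart]
  let shear : (ι → ZMod n) ≃ ZMod n × ({i // i ≠ i₀} → ZMod n) :=
    (Equiv.funSplitAt i₀ _).trans (Equiv.prodShear (.refl _) fun t =>
      Equiv.piCongrRight fun i => Equiv.subRight (if s i then t else 0))
  rw [mul_comm]
  refine (Nat.card_congr (((shear.trans (Equiv.prodComm _ _)).subtypeEquiv fun a => ?_).trans
    Equiv.prodSubtypeFstEquivSubtypeProd)).trans (by rw [Nat.card_prod, Nat.card_zmod])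
  rw [closure_range_eq_top_iff _ (i₀ := i₀) (b := a i₀) (by simp [hi₀])]
  simp only [hpart]
  rfl

theorem card_generating_tuples {ι : Type*} [Fintype ι] [DecidableEq ι] [NeZero n] :
    Nat.card {g : ι → DihedralGroup n // Subgroup.closure (Set.range g) = ⊤} =
      (2 ^ Fintype.card ι - 1) *
        (n * Nat.card (unimodularTuples (Fin (Fintype.card ι - 1)) (ZMod n))) := by
  let E : (ι → Bool) × (ι → ZMod n) ≃ (ι → DihedralGroup n) :=
    (Equiv.arrowProdEquivProdArrow _ _ _).symm.trans (Equiv.arrowCongr (.refl ι) ofBoolProd)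
  have hE : ∀ p, E p = fun i => ofBoolProd (p.1 i, p.2 i) := fun p => rfl
  have hsplit : Nat.card {g : ι → DihedralGroup n // Subgroup.closure (Set.range g) = ⊤} =
      ∑ s : ι → Bool, Nat.card {a : ι → ZMod n //
        Subgroup.closure (Set.range fun i => ofBoolProd (s i, a i)) = ⊤} := by
    let e : {p : (ι → Bool) × (ι → ZMod n) //
        Subgroup.closure (Set.range fun i => ofBoolProd (p.1 i, p.2 i)) = ⊤} ≃
        {g : ι → DihedralGroup n // Subgroup.closure (Set.range g) = ⊤} :=
      E.subtypeEquiv fun p => by rw [hE]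
    rw [← Nat.card_congr e, Nat.card_congr (Equiv.subtypeProdEquivSigmaSubtype
      fun (s : ι → Bool) (a : ι → ZMod n) =>
        Subgroup.closure (Set.range fun i => ofBoolProd (s i, a i)) = ⊤)]
    exact Nat.card_sigma
  have hrotations : Nat.card {a : ι → ZMod n //
      Subgroup.closure (Set.range fun i => ofBoolProd (false, a i)) = ⊤} = 0 := by
    have : IsEmpty {a : ι → ZMod n //
        Subgroup.closure (Set.range fun i => ofBoolProd (false, a i)) = ⊤} :=
      ⟨fun a => closure_range_r_ne_top a.1 a.2⟩
    exact Nat.card_of_isEmpty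
  have hreflection : ∀ s ≠ fun _ => false, Nat.card {a : ι → ZMod n //
      Subgroup.closure (Set.range fun i => ofBoolProd (s i, a i)) = ⊤} =
        n * Nat.card (unimodularTuples (Fin (Fintype.card ι - 1)) (ZMod n)) := by
    intro s hs
    obtain ⟨i₀, hi₀⟩ : ∃ i₀, s i₀ = true := by
      by_contra! h
      exact hs (funext fun i => by simpa using h i)
    rw [card_closure_range_ofBoolProd_eq_top s hi₀, card_unimodularTuples_congr
      (Fintype.equivFinOfCardEq (α := {i // i ≠ i₀}) (by simp)).symm]
    congr 1
    exact Nat.card_congr (Equiv.subtypeEquivRight fun c => ZMod.closure_eq_top_iff_span_eq_top _)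
  rw [hsplit, ← Finset.add_sum_erase _ _ (Finset.mem_univ fun _ => false), hrotations, zero_add,
    Finset.sum_congr rfl fun s hs => hreflection s (Finset.ne_of_mem_erase hs), Finset.sum_const,
    Finset.card_erase_of_mem (Finset.mem_univ _), Finset.card_univ, Fintype.card_fun,
    Fintype.card_bool, smul_eq_mul]

end DihedralGroup

/-- The number of surjective homomorphisms from the free group `F_n` onto the dihedral
group `D_{2m}` of order `2m` is `(2^n - 1) ⬝ m^n ⬝ ∏_{q prime, q ∣ m} (1 - q^{1-n})`. -/
theorem card_epi_freeGroup_dihedral (n m : ℕ) (hn : 1 ≤ n) (hm : 1 ≤ m) :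
    (Nat.card {ρ : FreeGroup (Fin n) →* DihedralGroup m // Function.Surjective ρ} : ℚ) =
      ((2 : ℚ) ^ n - 1) * (m : ℚ) ^ n *
        ∏ q ∈ m.primeFactors, (1 - (q : ℚ) ^ ((1 : ℤ) - (n : ℤ))) := by
  have : NeZero m := ⟨by omega⟩
  obtain ⟨k, rfl⟩ := Nat.exists_eq_add_of_le' hn
  rw [FreeGroup.card_surjective_monoidHom, DihedralGroup.card_generating_tuples, Fintype.card_fin,
    Nat.add_sub_cancel, Nat.cast_mul, Nat.cast_mul, card_unimodularTuples_zmod (NeZero.ne m),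
    Fintype.card_fin, Nat.cast_sub Nat.one_le_two_pow]
  have hexp : ∀ q : ℚ, q ^ ((1 : ℤ) - ((k + 1 : ℕ) : ℤ)) = (q ^ k)⁻¹ := fun q => by
    rw [← zpow_natCast, ← zpow_neg]
    congr 1
    push_cast
    ring
  simp only [hexp]
  push_cast
  ring
end

section
/- For the Baumslag–Solitar group BS(m,n) = ⟨x,y | x y^m x^{−1} y^{−n}⟩, the number of quotients isomorphic to the quaternion group Q₈, i.e. δ_{Q₈}(BS(m,n)) = |Epi(BS(m,n), Q₈)|/|Aut Q₈|, equals 1 if n − m is even and m + n ≡ 0 (mod 4), and 0 otherwise. -/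
/-- The Baumslag–Solitar group `BS(m,n) = ⟨x, y ∣ x y^m x⁻¹ y^{-n}⟩`, as a presented group
on two generators. -/
def BaumslagSolitar (m n : ℤ) : Type :=
  PresentedGroup ({FreeGroup.of 0 * FreeGroup.of 1 ^ m * (FreeGroup.of 0)⁻¹ *
    FreeGroup.of 1 ^ (-n)} : Set (FreeGroup (Fin 2)))

instance (m n : ℤ) : Group (BaumslagSolitar m n) :=
  QuotientGroup.Quotient.group _

namespace BSQ8
open QuaternionGroup

abbrev Q8 := QuaternionGroup 2

lemma key : ∀ p q : Q8, p*q ≠ q*p → q^4 = 1 ∧ p^2 = q^2 ∧ p*q*p⁻¹ = q⁻¹ ∧ q^2 ≠ 1 := by decide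

lemma gen : ∀ p q g : Q8, p*q ≠ q*p → ∃ i : Fin 4, ∃ j : Fin 2, g = q^(i:ℕ) * p^(j:ℕ) := by decide

lemma nc0 : (xa 0 : Q8) * a 1 ≠ a 1 * xa 0 := by decide

lemma nonab : ∃ p q : Q8, p * q ≠ q * p := ⟨_, _, nc0⟩

lemma pow_mod {q : Q8} (hq4 : q^4 = 1) (s : ℕ) : q^s = q^(s % 4) := by
  conv_lhs => rw [← Nat.div_add_mod s 4, pow_add, pow_mul, hq4, one_pow, one_mul]

lemma pow_eq {q : Q8} (hq4 : q^4 = 1) {s t : ℕ} (h : (s : ZMod 4) = (t : ZMod 4)) :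
    q^s = q^t := by
  rw [pow_mod hq4 s, pow_mod hq4 t]
  congr 1
  exact (ZMod.natCast_eq_natCast_iff s t 4).mp h

/-- The candidate endomorphism sending `a i ↦ q^i`, `xa i ↦ p * q^i`. -/
def fmap (p q : Q8) : Q8 → Q8
  | .a i => q ^ i.val
  | .xa i => p * q ^ i.val

lemma qmulp {p q : Q8} (h : p * q ≠ q * p) : q * p = p * q^3 := by
  obtain ⟨hq4, hp2, hc, hq2⟩ := key p q h
  have h2 : q⁻¹ = q^3 := (eq_inv_of_mul_eq_one_left (by rw [← pow_succ, hq4])).symm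
  have hA : p * q = q⁻¹ * p := by rw [← hc]; group
  have hB : q * (p * q) = p := by rw [hA]; group
  have hC : q * p = (q * (p * q)) * q⁻¹ := by group
  rw [hC, hB, h2]

lemma qpow_mul_p {p q : Q8} (h : p * q ≠ q * p) (s : ℕ) : q^s * p = p * q^(3*s) := by
  induction s with
  | zero => simp
  | succ k ih =>
    rw [pow_succ, mul_assoc, qmulp h, ← mul_assoc, ih, mul_assoc, ← pow_add,
      Nat.mul_add, Nat.mul_one]

lemma zval (i : ZMod 4) : ((i.val : ℕ) : ZMod 4) = i := by
  simp [ZMod.natCast_val, ZMod.cast_id]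

lemma h3val : (3 : ZMod 4) = -1 := by decide

/-- The endomorphism of `Q8` determined by a noncommuting pair. -/
def fhom {p q : Q8} (h : p * q ≠ q * p) : Q8 →* Q8 := by
  refine MonoidHom.mk' (fmap p q) ?_
  obtain ⟨hq4, hp2, hc, hq2⟩ := key p q h
  rintro (i | i) (j | j) <;>
    simp only [a_mul_a, a_mul_xa, xa_mul_a, xa_mul_xa, fmap]
  · rw [← pow_add]
    refine pow_eq hq4 ?_
    push_cast
    simp only [zval]
  · calc p * q ^ (j-i).val = p * q^(3*i.val + j.val) := by
          congr 1
          refine pow_eq hq4 ?_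
          push_cast
          simp only [zval, h3val]
          ring
    _ = p * q^(3*i.val) * q^(j.val) := by rw [pow_add]; group
    _ = q^(i.val) * p * q^(j.val) := by rw [← qpow_mul_p h]
    _ = q^(i.val) * (p * q^(j.val)) := by group
  · rw [mul_assoc, ← pow_add]
    congr 1
    refine pow_eq hq4 ?_
    push_cast
    simp only [zval]
  · calc q ^ (((2:ℕ) : ZMod (2*2)) + j - i).val = q^(2 + (3*i.val + j.val)) := by
          refine pow_eq hq4 ?_
          push_cast
          simp only [zval, h3val]
          ring
    _ = q^2 * (q^(3*i.val) * q^(j.val)) := by rw [pow_add, pow_add]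
    _ = p^2 * (q^(3*i.val) * q^(j.val)) := by rw [hp2]
    _ = p * (p * q^(3*i.val)) * q^(j.val) := by rw [sq]; group
    _ = p * (q^(i.val) * p) * q^(j.val) := by rw [← qpow_mul_p h]
    _ = p * q^(i.val) * (p * q^(j.val)) := by group


lemma fhom_surj {p q : Q8} (h : p * q ≠ q * p) : Function.Surjective (fhom h) := by
  obtain ⟨hq4, hp2, hc, hq2⟩ := key p q h
  intro g
  obtain ⟨i, j, rfl⟩ := gen p q g h
  fin_cases j
  · refine ⟨.a ((i : ℕ) : ZMod (2*2)), ?_⟩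
    show q ^ (((i:ℕ) : ZMod (2*2)).val) = q ^ (i:ℕ) * p ^ 0
    rw [pow_zero, mul_one]
    refine pow_eq hq4 ?_
    push_cast
    simp only [zval]
  · refine ⟨.xa ((3 * (i : ℕ) : ℕ) : ZMod (2*2)), ?_⟩
    show p * q ^ (((3 * (i:ℕ) : ℕ) : ZMod (2*2)).val) = q ^ (i:ℕ) * p ^ 1
    rw [pow_one, qpow_mul_p h]
    congr 1
    refine pow_eq hq4 ?_
    push_cast
    simp only [zval]

/-- The automorphism of `Q8` determined by a noncommuting pair. -/
noncomputable def aut {p q : Q8} (h : p * q ≠ q * p) : MulAut Q8 :=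
  MulEquiv.ofBijective (fhom h)
    ⟨Finite.injective_iff_surjective.mpr (fhom_surj h), fhom_surj h⟩

lemma aut_xa0 {p q : Q8} (h : p * q ≠ q * p) : aut h (xa 0) = p := by
  show fmap p q (xa 0) = p
  show p * q ^ ((0 : ZMod (2*2)).val) = p
  norm_num

lemma aut_a1 {p q : Q8} (h : p * q ≠ q * p) : aut h (a 1) = q := by
  show fmap p q (a 1) = q
  show q ^ ((1 : ZMod (2*2)).val) = q
  rw [show ((1 : ZMod (2*2)).val) = 1 from rfl, pow_one]

lemma aut_ext {φ ψ : MulAut Q8} (h0 : φ (xa 0) = ψ (xa 0)) (h1 : φ (a 1) = ψ (a 1)) :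
    φ = ψ := by
  ext g
  obtain ⟨i, j, rfl⟩ := gen (xa 0) (a 1) g nc0
  rw [map_mul, map_mul, map_pow, map_pow, map_pow, map_pow, h0, h1]

/-- Automorphisms of `Q8` biject with noncommuting pairs. -/
noncomputable def pairsEquiv : MulAut Q8 ≃ {s : Q8 × Q8 // s.1 * s.2 ≠ s.2 * s.1} where
  toFun φ := ⟨(φ (xa 0), φ (a 1)), fun hcm =>
    nc0 (φ.injective (by rw [map_mul, map_mul, hcm]))⟩
  invFun s := aut s.2
  left_inv φ := by
    refine aut_ext ?_ ?_ <;> simp [aut_xa0, aut_a1]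
  right_inv s := by
    refine Subtype.ext (Prod.ext ?_ ?_) <;> simp [aut_xa0, aut_a1]

lemma closure_pair_top_iff (p q : Q8) :
    Subgroup.closure {p, q} = ⊤ ↔ p * q ≠ q * p := by
  constructor
  · intro htop hcm
    have hcent : Subgroup.closure {p, q} ≤ Subgroup.centralizer {p, q} := by
      refine (Subgroup.closure_le _).mpr ?_
      rintro x (rfl | rfl) <;>
        · refine Subgroup.mem_centralizer_iff.mpr ?_
          rintro g (rfl | rfl) <;> first | rfl | exact hcm | exact hcm.symm
    rw [htop, top_le_iff] at hcent
    have hall : ∀ g s : Q8, s ∈ ({p, q} : Set Q8) → s * g = g * s := fun g s hs =>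
      Subgroup.mem_centralizer_iff.mp (hcent ▸ Subgroup.mem_top g) s hs
    have hcen : Subgroup.closure {p, q} ≤ Subgroup.center Q8 := by
      refine (Subgroup.closure_le _).mpr ?_
      rintro x hx
      exact Subgroup.mem_center_iff.mpr fun g => (hall g x hx).symm ▸ (hall g x hx)
    rw [htop, top_le_iff] at hcen
    obtain ⟨u, v, huv⟩ := nonab
    exact huv ((Subgroup.mem_center_iff.mp (hcen ▸ Subgroup.mem_top u) v).symm)
  · intro h
    rw [Subgroup.eq_top_iff']
    intro g
    obtain ⟨i, j, rfl⟩ := gen p q g h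
    exact mul_mem (pow_mem (Subgroup.subset_closure (by simp)) _)
      (pow_mem (Subgroup.subset_closure (by simp)) _)

/-! ### The Baumslag–Solitar side -/

abbrev bsRels (m n : ℤ) : Set (FreeGroup (Fin 2)) :=
  {FreeGroup.of 0 * FreeGroup.of 1 ^ m * (FreeGroup.of 0)⁻¹ * FreeGroup.of 1 ^ (-n)}

variable {m n : ℤ}

lemma range_eq (ρ : PresentedGroup (bsRels m n) →* Q8) :
    MonoidHom.range ρ =
      Subgroup.closure {ρ (PresentedGroup.of 0), ρ (PresentedGroup.of 1)} := by
  rw [MonoidHom.range_eq_map, ← PresentedGroup.closure_range_of (bsRels m n),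
    MonoidHom.map_closure]
  congr 1
  rw [← Set.range_comp]
  ext g
  constructor
  · rintro ⟨i, rfl⟩
    fin_cases i <;> simp
  · rintro (rfl | rfl)
    exacts [⟨0, rfl⟩, ⟨1, rfl⟩]

lemma surj_iff (ρ : PresentedGroup (bsRels m n) →* Q8) :
    Function.Surjective ρ ↔
      ρ (PresentedGroup.of 0) * ρ (PresentedGroup.of 1) ≠
        ρ (PresentedGroup.of 1) * ρ (PresentedGroup.of 0) := by
  rw [← MonoidHom.range_eq_top, range_eq ρ, closure_pair_top_iff]

lemma relator_eq_one (ρ : PresentedGroup (bsRels m n) →* Q8) :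
    ρ (PresentedGroup.of 0) * ρ (PresentedGroup.of 1) ^ m *
      (ρ (PresentedGroup.of 0))⁻¹ * ρ (PresentedGroup.of 1) ^ (-n) = 1 := by
  have hm : PresentedGroup.mk (bsRels m n)
      (FreeGroup.of 0 * FreeGroup.of 1 ^ m * (FreeGroup.of 0)⁻¹ * FreeGroup.of 1 ^ (-n)) = 1 :=
    (QuotientGroup.eq_one_iff _).mpr (Subgroup.subset_normalClosure rfl)
  have h1 : (PresentedGroup.of (rels := bsRels m n) 0) * (PresentedGroup.of 1) ^ m *
      (PresentedGroup.of (rels := bsRels m n) 0)⁻¹ * (PresentedGroup.of 1) ^ (-n) = 1 := by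
    rw [← hm, map_mul, map_mul, map_mul, map_zpow, map_zpow, map_inv]
    rfl
  have := congrArg ρ h1
  rwa [map_mul, map_mul, map_mul, map_zpow, map_zpow, map_inv, map_one] at this

lemma conj_red {p q : Q8} (h : p * q ≠ q * p) :
    p * q ^ m * p⁻¹ * q ^ (-n) = q ^ (-(m + n)) := by
  obtain ⟨hq4, hp2, hc, hq2⟩ := key p q h
  have h1 : p * q ^ m * p⁻¹ = q ^ (-m) := by
    rw [← conj_zpow, hc, inv_zpow, zpow_neg]
  rw [h1, ← zpow_add, neg_add]

lemma zpow_four {q : Q8} (hq4 : q ^ 4 = 1) : q ^ (4 : ℤ) = 1 := by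
  rw [show (4 : ℤ) = ((4 : ℕ) : ℤ) from rfl, zpow_natCast, hq4]

lemma dvd_of_zpow_eq_one {q : Q8} (hq4 : q ^ 4 = 1) (hq2 : q ^ 2 ≠ 1) {z : ℤ}
    (hz : q ^ z = 1) : z % 4 = 0 := by
  have h40 : q ^ (4 : ℤ) = 1 := zpow_four hq4
  have hz4 : q ^ (z % 4) = 1 := by
    have hdm : 4 * (z / 4) + z % 4 = z := Int.mul_ediv_add_emod z 4
    have : q ^ (4 * (z / 4) + z % 4) = 1 := by rw [hdm, hz]
    rwa [zpow_add, zpow_mul, h40, one_zpow, one_mul] at this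
  have h0 : 0 ≤ z % 4 := Int.emod_nonneg z (by norm_num)
  have h4 : z % 4 < 4 := Int.emod_lt_of_pos z (by norm_num)
  set r := z % 4 with hr
  interval_cases r
  · rfl
  · exfalso; apply hq2
    rw [zpow_one] at hz4
    rw [hz4, one_pow]
  · exfalso; apply hq2
    rwa [show (2 : ℤ) = ((2 : ℕ) : ℤ) from rfl, zpow_natCast] at hz4
  · exfalso; apply hq2
    have h3 : q ^ (3 : ℕ) = 1 := by
      rwa [show (3 : ℤ) = ((3 : ℕ) : ℤ) from rfl, zpow_natCast] at hz4
    have : q = 1 := by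
      calc q = q ^ (4 : ℕ) * (q ^ (3 : ℕ))⁻¹ := by group
      _ = 1 := by rw [hq4, h3]; group
    rw [this, one_pow]

lemma lift_rel {p q : Q8} (h : p * q ≠ q * p) (hdvd : (4 : ℤ) ∣ m + n) :
    ∀ r ∈ bsRels m n, FreeGroup.lift ![p, q] r = 1 := by
  obtain ⟨hq4, hp2, hc, hq2⟩ := key p q h
  intro r hr
  rw [Set.mem_singleton_iff] at hr
  subst hr
  rw [map_mul, map_mul, map_mul, map_zpow, map_zpow, map_inv,
    FreeGroup.lift_apply_of, FreeGroup.lift_apply_of]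
  show p * (![p, q] 1) ^ m * p⁻¹ * (![p, q] 1) ^ (-n) = 1
  have h1 : (![p, q] 1 : Q8) = q := rfl
  rw [h1, conj_red h]
  obtain ⟨k, hk⟩ := hdvd
  rw [hk, show -(4 * k) = 4 * (-k) by ring, zpow_mul, zpow_four hq4, one_zpow]

/-- Epimorphisms `BS(m,n) → Q8` biject with noncommuting pairs, when `4 ∣ m + n`. -/
noncomputable def epiEquiv (hdvd : (4 : ℤ) ∣ m + n) :
    {ρ : PresentedGroup (bsRels m n) →* Q8 // Function.Surjective ρ} ≃
      {s : Q8 × Q8 // s.1 * s.2 ≠ s.2 * s.1} where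
  toFun ρ := ⟨(ρ.1 (PresentedGroup.of 0), ρ.1 (PresentedGroup.of 1)), (surj_iff ρ.1).mp ρ.2⟩
  invFun s := ⟨PresentedGroup.toGroup (lift_rel s.2 hdvd), by
    rw [surj_iff]
    rw [PresentedGroup.toGroup.of, PresentedGroup.toGroup.of]
    exact s.2⟩
  left_inv ρ := by
    refine Subtype.ext (PresentedGroup.ext fun x => ?_)
    fin_cases x <;>
      simp only [PresentedGroup.toGroup.of] <;> rfl
  right_inv s := by
    refine Subtype.ext (Prod.ext ?_ ?_) <;>
      simp only [PresentedGroup.toGroup.of] <;> rfl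

end BSQ8

/-- For `0 < m ≤ |n|`, the Hall invariant `δ_{Q₈}(BS(m,n)) = |Epi(BS(m,n), Q₈)|/|Aut Q₈|`
equals `1` if `n - m` is even and `m + n ≡ 0 (mod 4)`, and `0` otherwise.  Equivalently,
`|Epi(BS(m,n), Q₈)|` is `|Aut Q₈|` in the first case and `0` otherwise.
Here `Q₈` is the quaternion group of order 8, i.e. `QuaternionGroup 2`. -/
theorem hall_invariant_Q8_baumslagSolitar (m n : ℤ) (hm : 0 < m) (hmn : m ≤ |n|) :
    Nat.card {ρ : BaumslagSolitar m n →* QuaternionGroup 2 // Function.Surjective ρ} =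
      (if Even (n - m) ∧ (m + n) % 4 = 0 then 1 else 0) *
        Nat.card (MulAut (QuaternionGroup 2)) := by
  classical
  by_cases hd : (m + n) % 4 = 0
  · obtain ⟨k, hk⟩ : (4 : ℤ) ∣ m + n := Int.dvd_of_emod_eq_zero hd
    have heven : Even (n - m) := ⟨2 * k - m, by omega⟩
    rw [if_pos ⟨heven, hd⟩, one_mul]
    exact Nat.card_congr ((BSQ8.epiEquiv ⟨k, hk⟩).trans BSQ8.pairsEquiv.symm)
  · rw [if_neg (fun hcond => hd hcond.2), zero_mul]
    have hempty : IsEmpty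
        {ρ : PresentedGroup (BSQ8.bsRels m n) →* BSQ8.Q8 // Function.Surjective ρ} := by
      constructor
      rintro ⟨ρ', hρ'⟩
      have hnc := (BSQ8.surj_iff ρ').mp hρ'
      have hrel := BSQ8.relator_eq_one ρ'
      rw [BSQ8.conj_red hnc] at hrel
      rw [zpow_neg, inv_eq_one] at hrel
      obtain ⟨hq4, hp2, hc, hq2⟩ := BSQ8.key _ _ hnc
      exact hd (BSQ8.dvd_of_zpow_eq_one hq4 hq2 hrel)
    exact @Nat.card_of_isEmpty _ hempty
end

section
/- For the Baumslag–Solitar group BS(m,n), the invariant δ_{D₈}(BS(m,n)) = |Epi(BS(m,n), D₈)|/|Aut D₈| equals 3 if m is even and n − m ≡ 0 (mod 4); equals 2 if m is even and n − m ≡ 2 (mod 4); equals 1 if m is odd and n − m ≡ 2 (mod 4); and equals 0 otherwise. -/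
namespace BSP

abbrev D8 := DihedralGroup 4

/-! ### Generating pairs of `D8`, decidably -/

def step (a b : D8) (s : Finset D8) : Finset D8 :=
  s ∪ s.image (· * a) ∪ s.image (· * b)

def genSet (a b : D8) : Finset D8 := (step a b)^[8] {1}

def genB (a b : D8) : Bool :=
  match a, b with
  | .r i, .sr _ => i = 1 || i = 3
  | .sr _, .r j => j = 1 || j = 3
  | .sr i, .sr j => i - j = 1 || i - j = 3
  | .r _, .r _ => false

/-- Decidable characterization of generating pairs of `D8`. -/
def gen (a b : D8) : Prop := genB a b = true

instance (a b : D8) : Decidable (gen a b) := by unfold gen; infer_instance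

lemma subset_step (a b : D8) (s : Finset D8) : s ⊆ step a b s := by
  intro x hx; exact Finset.mem_union_left _ (Finset.mem_union_left _ hx)

lemma one_mem_genSet (a b : D8) : (1 : D8) ∈ genSet a b := by
  have : ∀ k, (1 : D8) ∈ (step a b)^[k] {1} := by
    intro k
    induction k with
    | zero => simp
    | succ k ih => rw [Function.iterate_succ_apply']; exact subset_step a b _ ih
  exact this 8

lemma genSet_subset_closure (a b : D8) : ∀ x ∈ genSet a b, x ∈ Subgroup.closure {a, b} := by
  have key : ∀ k, ∀ x ∈ (step a b)^[k] ({1} : Finset D8), x ∈ Subgroup.closure {a, b} := by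
    intro k
    induction k with
    | zero => intro x hx; simp at hx; subst hx; exact one_mem _
    | succ k ih =>
      rw [Function.iterate_succ_apply']
      intro x hx
      rcases Finset.mem_union.mp hx with h | h
      · rcases Finset.mem_union.mp h with h | h
        · exact ih x h
        · obtain ⟨y, hy, rfl⟩ := Finset.mem_image.mp h
          exact mul_mem (ih y hy) (Subgroup.subset_closure (by simp))
      · obtain ⟨y, hy, rfl⟩ := Finset.mem_image.mp h
        exact mul_mem (ih y hy) (Subgroup.subset_closure (by simp))
  exact key 8

set_option maxHeartbeats 4000000 in
lemma genSet_sat : ∀ a b : D8, step a b (genSet a b) = genSet a b := by decide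

set_option maxHeartbeats 4000000 in
lemma genSet_eq_univ_iff_gen : ∀ a b : D8, genSet a b = Finset.univ ↔ gen a b := by decide

lemma inv_eq_pow_three : ∀ x : D8, x⁻¹ = x ^ (3 : ℕ) := by decide

set_option maxHeartbeats 2000000 in
lemma closure_eq_top_iff (a b : D8) :
    Subgroup.closure {a, b} = ⊤ ↔ gen a b := by
  rw [← genSet_eq_univ_iff_gen]
  constructor
  · intro h
    have hstep := genSet_sat a b
    have hmul : ∀ x ∈ Submonoid.closure ({a, b} : Set D8),
        ∀ y ∈ genSet a b, y * x ∈ genSet a b := by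
      intro x hx
      induction hx using Submonoid.closure_induction with
      | mem z hz =>
        intro y hy
        rcases hz with rfl | rfl
        · rw [← hstep]; exact Finset.mem_union_left _
            (Finset.mem_union_right _ (Finset.mem_image_of_mem _ hy))
        · rw [← hstep]; exact Finset.mem_union_right _ (Finset.mem_image_of_mem _ hy)
      | one => intro y hy; simpa using hy
      | mul u v _ _ ihu ihv =>
        intro y hy
        rw [← mul_assoc]
        exact ihv _ (ihu _ hy)
    have hsub : ∀ x ∈ Submonoid.closure ({a, b} : Set D8), x ∈ genSet a b := fun x hx => by
      simpa using hmul x hx 1 (one_mem_genSet a b)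
    have hle : ({a, b} : Set D8) ∪ ({a, b} : Set D8)⁻¹ ⊆
        ↑(Submonoid.closure ({a, b} : Set D8)) := by
      rintro x (hx | hx)
      · exact Submonoid.subset_closure hx
      · rw [Set.mem_inv] at hx
        have hx3 : x = x⁻¹ ^ (3 : ℕ) := by rw [← inv_eq_pow_three, inv_inv]
        rw [hx3]
        exact pow_mem (Submonoid.subset_closure hx) 3
    apply Finset.eq_univ_iff_forall.mpr
    intro x
    apply hsub
    have hx : x ∈ (Subgroup.closure ({a, b} : Set D8)).toSubmonoid := by
      rw [h]; trivial
    rw [Subgroup.closure_toSubmonoid] at hx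
    exact Submonoid.closure_le.mpr hle hx
  · intro h
    rw [eq_top_iff]
    intro x _
    exact genSet_subset_closure a b x (h ▸ Finset.mem_univ x)

/-! ### Homomorphisms from `BS(m,n)` -/

variable {G : Type*} [Group G]

def bsRels (m n : ℤ) : Set (FreeGroup (Fin 2)) :=
  {FreeGroup.of 0 * FreeGroup.of 1 ^ m * (FreeGroup.of 0)⁻¹ * FreeGroup.of 1 ^ (-n)}

def bsFun (p : G × G) : Fin 2 → G := fun i => if i = 0 then p.1 else p.2

lemma bs_lift {m n : ℤ} {p : G × G} (hp : p.1 * p.2 ^ m * p.1⁻¹ * p.2 ^ (-n) = 1) :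
    ∀ r ∈ bsRels m n, FreeGroup.lift (bsFun p) r = 1 := by
  rintro r hr
  rw [bsRels, Set.mem_singleton_iff] at hr
  subst hr
  simpa [bsFun, map_mul, map_zpow, map_inv] using hp

lemma rel_eq_one (m n : ℤ) :
    (PresentedGroup.of 0 : PresentedGroup (bsRels m n)) * PresentedGroup.of 1 ^ m *
      (PresentedGroup.of 0)⁻¹ * PresentedGroup.of 1 ^ (-n) = 1 := by
  have h : (PresentedGroup.mk (bsRels m n))
      (FreeGroup.of 0 * FreeGroup.of 1 ^ m * (FreeGroup.of 0)⁻¹ * FreeGroup.of 1 ^ (-n)) = 1 := by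
    have : (FreeGroup.of 0 * FreeGroup.of 1 ^ m * (FreeGroup.of 0)⁻¹ * FreeGroup.of 1 ^ (-n) :
        FreeGroup (Fin 2)) ∈ Subgroup.normalClosure (bsRels m n) :=
      Subgroup.subset_normalClosure rfl
    exact (QuotientGroup.eq_one_iff _).mpr this
  simpa [map_mul, map_zpow, map_inv, PresentedGroup.of] using h

/-- Homs from `BS(m,n)` to `G` correspond to pairs satisfying the relation. -/
noncomputable def homEquiv (m n : ℤ) :
    (PresentedGroup (bsRels m n) →* G) ≃
      {p : G × G // p.1 * p.2 ^ m * p.1⁻¹ * p.2 ^ (-n) = 1} where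
  toFun ρ := ⟨(ρ (PresentedGroup.of 0), ρ (PresentedGroup.of 1)), by
    simpa [map_mul, map_zpow, map_inv] using congrArg ρ (rel_eq_one m n)⟩
  invFun p := PresentedGroup.toGroup (bs_lift p.2)
  left_inv ρ := by
    symm
    ext x
    rw [PresentedGroup.toGroup.of]
    fin_cases x <;> simp [bsFun]
  right_inv p := by
    apply Subtype.ext
    apply Prod.ext <;> simp [PresentedGroup.toGroup.of, bsFun]

lemma surj_iff_closure {rels : Set (FreeGroup (Fin 2))} (ρ : PresentedGroup rels →* G) :
    Function.Surjective ρ ↔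
      Subgroup.closure {ρ (PresentedGroup.of 0), ρ (PresentedGroup.of 1)} = ⊤ := by
  rw [← MonoidHom.range_eq_top]
  have h1 : (Set.range (PresentedGroup.of : Fin 2 → PresentedGroup rels)) =
      {PresentedGroup.of 0, PresentedGroup.of 1} := by
    ext x
    constructor
    · rintro ⟨i, rfl⟩; fin_cases i <;> simp
    · rintro (rfl | rfl) <;> [exact ⟨0, rfl⟩; exact ⟨1, rfl⟩]
  have h2 : ρ.range = Subgroup.closure
      {ρ (PresentedGroup.of 0), ρ (PresentedGroup.of 1)} := by
    rw [MonoidHom.range_eq_map, ← PresentedGroup.closure_range_of rels,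
      MonoidHom.map_closure, h1]
    congr 1
    simp [Set.image_insert_eq]
  rw [h2]

/-- Surjective homs from `BS(m,n)` to `D8` correspond to generating pairs satisfying the
relation. -/
noncomputable def surjEquiv (m n : ℤ) :
    {ρ : PresentedGroup (bsRels m n) →* D8 // Function.Surjective ρ} ≃
      {p : D8 × D8 // (p.1 * p.2 ^ m * p.1⁻¹ * p.2 ^ (-n) = 1) ∧ gen p.1 p.2} :=
  ((homEquiv m n).subtypeEquiv (fun ρ => by
      rw [surj_iff_closure ρ, closure_eq_top_iff]
      exact Iff.rfl)).trans
    (Equiv.subtypeSubtypeEquivSubtypeInter _ _)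

/-! ### Counting -/

set_option maxHeartbeats 4000000 in
lemma count_pairs (m n : ℤ) :
    Nat.card {p : D8 × D8 // (p.1 * p.2 ^ m * p.1⁻¹ * p.2 ^ (-n) = 1) ∧ gen p.1 p.2} =
      (if Even m ∧ (n - m) % 4 = 0 then 3
        else if Even m ∧ (n - m) % 4 = 2 then 2
        else if ¬ Even m ∧ (n - m) % 4 = 2 then 1
        else 0) * 8 := by
  have hx4 : ∀ x : D8, x ^ (4 : ℤ) = 1 := by decide
  have e : Nat.card {p : D8 × D8 // (p.1 * p.2 ^ m * p.1⁻¹ * p.2 ^ (-n) = 1) ∧ gen p.1 p.2} =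
      Nat.card {p : D8 × D8 //
        (p.1 * p.2 ^ (m % 4) * p.1⁻¹ * p.2 ^ ((-n) % 4) = 1) ∧ gen p.1 p.2} :=
    Nat.card_congr (Equiv.subtypeEquivRight fun p => by
      rw [zpow_eq_zpow_emod m (hx4 p.2), zpow_eq_zpow_emod (-n) (hx4 p.2)])
  rw [e]
  have h3 : m % 2 = m % 4 % 2 := by omega
  have h4 : (-n) % 4 = (4 - n % 4) % 4 := by omega
  rcases (by omega : m % 4 = 0 ∨ m % 4 = 1 ∨ m % 4 = 2 ∨ m % 4 = 3) with hm4 | hm4 | hm4 | hm4 <;>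
    rcases (by omega : n % 4 = 0 ∨ n % 4 = 1 ∨ n % 4 = 2 ∨ n % 4 = 3)
      with hn4 | hn4 | hn4 | hn4 <;>
  · simp only [Int.even_iff, Int.sub_emod n m 4, h3, h4, hm4, hn4]
    norm_num
    decide

section Lift
variable {G : Type*} [Group G]

lemma zpow_eq_of_zmod {a : G} (ha : a ^ (4 : ℤ) = 1) {x y : ℤ}
    (h : ((x : ZMod 4) : ZMod 4) = (y : ZMod 4)) : a ^ x = a ^ y := by
  rw [ZMod.intCast_eq_intCast_iff] at h
  have h' : x % 4 = y % 4 := by exact_mod_cast h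
  have hx := zpow_eq_zpow_emod x ha
  have hy := zpow_eq_zpow_emod y ha
  rw [hx, hy, h']

lemma natval (i : ZMod 4) : ((i.val : ℤ) : ZMod 4) = i := by
  rw [Int.cast_natCast, ZMod.natCast_val, ZMod.cast_id]

/-- The homomorphism `DihedralGroup 4 →* G` determined by images of `r 1` and `sr 0`. -/
def dihedralHom (a b : G) (ha : a ^ (4 : ℤ) = 1) (hb : b * b = 1)
    (hc : b * a * b⁻¹ = a⁻¹) : DihedralGroup 4 →* G where
  toFun x := match x with
    | .r i => a ^ (i.val : ℤ)
    | .sr i => b * a ^ (i.val : ℤ)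
  map_one' := by
    show a ^ (((0 : ZMod 4)).val : ℤ) = 1
    simp [ZMod.val_zero]
  map_mul' x y := by
    have hcz : ∀ k : ℤ, a ^ k * b = b * a ^ (-k) := by
      intro k
      have h1 : b * a ^ (-k) * b⁻¹ = a ^ k := by
        rw [← conj_zpow, hc, inv_zpow, ← zpow_neg, neg_neg]
      have h2 : b⁻¹ = b := by
        rw [inv_eq_iff_mul_eq_one, hb]
      calc a ^ k * b = (b * a ^ (-k) * b⁻¹) * b := by rw [h1]
        _ = b * a ^ (-k) * (b⁻¹ * b) := by group
        _ = b * a ^ (-k) := by rw [inv_mul_cancel, mul_one]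
    rcases x with i | i <;> rcases y with j | j
    · show a ^ (((i + j).val : ℤ)) = a ^ ((i.val : ℤ)) * a ^ ((j.val : ℤ))
      rw [← zpow_add]
      exact zpow_eq_of_zmod ha (by push_cast [ZMod.natCast_val, ZMod.cast_id]; ring)
    · show b * a ^ (((j - i).val : ℤ)) = a ^ ((i.val : ℤ)) * (b * a ^ ((j.val : ℤ)))
      rw [← mul_assoc, hcz, mul_assoc, ← zpow_add]
      congr 1
      exact zpow_eq_of_zmod ha (by push_cast [ZMod.natCast_val, ZMod.cast_id]; ring)
    · show b * a ^ (((i + j).val : ℤ)) = (b * a ^ ((i.val : ℤ))) * a ^ ((j.val : ℤ))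
      rw [mul_assoc, ← zpow_add]
      congr 1
      exact zpow_eq_of_zmod ha (by push_cast [ZMod.natCast_val, ZMod.cast_id]; ring)
    · show a ^ (((j - i).val : ℤ)) = (b * a ^ ((i.val : ℤ))) * (b * a ^ ((j.val : ℤ)))
      symm
      calc (b * a ^ ((i.val : ℤ))) * (b * a ^ ((j.val : ℤ)))
          = b * (a ^ ((i.val : ℤ)) * b) * a ^ ((j.val : ℤ)) := by group
        _ = b * (b * a ^ (-(i.val : ℤ))) * a ^ ((j.val : ℤ)) := by rw [hcz]
        _ = (b * b) * (a ^ (-(i.val : ℤ)) * a ^ ((j.val : ℤ))) := by group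
        _ = a ^ (-(i.val : ℤ) + (j.val : ℤ)) := by rw [hb, one_mul, zpow_add]
        _ = a ^ (((j - i).val : ℤ)) := by
            symm; exact zpow_eq_of_zmod ha (by push_cast [ZMod.natCast_val, ZMod.cast_id]; ring)

@[simp] lemma dihedralHom_r (a b : G) (ha) (hb) (hc) (i : ZMod 4) :
    dihedralHom a b ha hb hc (.r i) = a ^ (i.val : ℤ) := rfl
@[simp] lemma dihedralHom_sr (a b : G) (ha) (hb) (hc) (i : ZMod 4) :
    dihedralHom a b ha hb hc (.sr i) = b * a ^ (i.val : ℤ) := rfl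

end Lift

lemma r_one_zpow_val : ∀ i : ZMod 4, (DihedralGroup.r 1 : D8) ^ ((i.val : ℤ)) = .r i := by decide
lemma sr_zero_mul : ∀ i : ZMod 4,
    (DihedralGroup.sr 0 : D8) * (DihedralGroup.r 1 : D8) ^ ((i.val : ℤ)) = .sr i := by decide
lemma hr4 : (DihedralGroup.r 1 : D8) ^ (4 : ℤ) = 1 := by decide
lemma hsr2 : (DihedralGroup.sr 0 : D8) * .sr 0 = 1 := by decide
lemma hconj : (DihedralGroup.sr 0 : D8) * .r 1 * (.sr 0 : D8)⁻¹ = (.r 1 : D8)⁻¹ := by decide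
lemma gen_r_sr : gen (.r 1) (.sr 0) := by decide

/-- Automorphisms of `D8` correspond to suitable pairs. -/
noncomputable def mulAutEquiv : MulAut D8 ≃
    {p : D8 × D8 // (p.1 ^ (4 : ℤ) = 1 ∧ p.2 * p.2 = 1 ∧ p.2 * p.1 * p.2⁻¹ = p.1⁻¹) ∧
      gen p.1 p.2} where
  toFun φ := ⟨(φ (.r 1), φ (.sr 0)),
    ⟨⟨by rw [← map_zpow, hr4, map_one],
      ⟨by rw [← map_mul, hsr2, map_one],
       by rw [← map_inv, ← map_inv, ← map_mul, ← map_mul, hconj]⟩⟩,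
     by
      rw [← closure_eq_top_iff]
      have himg : ({φ (.r 1), φ (.sr 0)} : Set D8) = ⇑φ '' {(.r 1), (.sr 0)} := by
        rw [Set.image_pair]
      rw [himg, show ⇑φ = ⇑φ.toMonoidHom from rfl, ← MonoidHom.map_closure,
        (closure_eq_top_iff _ _).mpr gen_r_sr]
      exact Subgroup.map_top_of_surjective _ φ.surjective⟩⟩
  invFun p :=
    letI ψ := dihedralHom p.1.1 p.1.2 p.2.1.1 p.2.1.2.1 p.2.1.2.2
    MulEquiv.ofBijective ψ (by
      have hsurj : Function.Surjective ψ := by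
        rw [← MonoidHom.range_eq_top]
        rw [eq_top_iff, ← (closure_eq_top_iff _ _).mpr p.2.2]
        apply Subgroup.closure_le _ |>.mpr
        rintro x (rfl | rfl)
        · refine ⟨.r 1, ?_⟩
          show p.1.1 ^ ((1 : ZMod 4).val : ℤ) = p.1.1
          rw [show ((1 : ZMod 4).val : ℤ) = 1 from rfl, zpow_one]
        · refine ⟨.sr 0, ?_⟩
          show p.1.2 * p.1.1 ^ ((0 : ZMod 4).val : ℤ) = p.1.2
          rw [show ((0 : ZMod 4).val : ℤ) = 0 from rfl, zpow_zero, mul_one]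
      exact ⟨Finite.injective_iff_surjective.mpr hsurj, hsurj⟩)
  left_inv φ := by
    ext x
    rcases x with i | i
    · show φ (.r 1) ^ ((i.val : ℤ)) = φ (.r i)
      rw [← map_zpow, r_one_zpow_val]
    · show φ (.sr 0) * φ (.r 1) ^ ((i.val : ℤ)) = φ (.sr i)
      rw [← map_zpow, ← map_mul, sr_zero_mul]
  right_inv p := by
    apply Subtype.ext
    apply Prod.ext
    · show p.1.1 ^ (((1 : ZMod 4)).val : ℤ) = p.1.1
      rw [show ((1 : ZMod 4).val : ℤ) = 1 from rfl, zpow_one]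
    · show p.1.2 * p.1.1 ^ (((0 : ZMod 4)).val : ℤ) = p.1.2
      rw [show ((0 : ZMod 4).val : ℤ) = 0 from rfl, zpow_zero, mul_one]


set_option maxHeartbeats 2000000 in
lemma cardMulAut : Nat.card (MulAut (DihedralGroup 4)) = 8 := by
  rw [Nat.card_congr mulAutEquiv, Nat.card_eq_fintype_card]
  decide

end BSP

/-- For `0 < m ≤ |n|`, the Hall invariant `δ_{D₈}(BS(m,n)) = |Epi(BS(m,n), D₈)|/|Aut D₈|`
equals `3` if `m` is even and `n - m ≡ 0 (mod 4)`, `2` if `m` is even and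
`n - m ≡ 2 (mod 4)`, `1` if `m` is odd and `n - m ≡ 2 (mod 4)`, and `0` otherwise.
Equivalently, `|Epi(BS(m,n), D₈)|` equals the corresponding multiple of `|Aut D₈|`.
Here `D₈` is the dihedral group of order 8, i.e. `DihedralGroup 4`. -/
theorem hall_invariant_D8_baumslagSolitar (m n : ℤ) (hm : 0 < m) (hmn : m ≤ |n|) :
    Nat.card {ρ : BaumslagSolitar m n →* DihedralGroup 4 // Function.Surjective ρ} =
      (if Even m ∧ (n - m) % 4 = 0 then 3
        else if Even m ∧ (n - m) % 4 = 2 then 2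
        else if ¬ Even m ∧ (n - m) % 4 = 2 then 1
        else 0) * Nat.card (MulAut (DihedralGroup 4)) := by
  rw [BSP.cardMulAut, ← BSP.count_pairs m n]
  exact Nat.card_congr (BSP.surjEquiv m n)
end

section
/- The number of surjective homomorphisms from the free group F_n onto the symmetric group S₄ is (2^n − 1)(3^n − 3)(4^n − 4). -/
set_option maxRecDepth 100000
set_option maxHeartbeats 4000000

open Subgroup Function

theorem gen_count {G Q : Type*} [Group G] [Group Q] [Finite G] [Finite Q]
    (π : G →* Q) (hπ : Function.Surjective π)
    {ι : Type*} [Finite ι] (C : ι → Subgroup G) (hCinj : Function.Injective C)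
    (hCtop : ∀ i, (C i).map π = ⊤)
    (hCmono : ∀ i, ∀ x ∈ C i, ∀ y ∈ C i, π x = π y → x = y)
    (hCne : ∀ i, C i ≠ ⊤)
    (hclass : ∀ K : Subgroup G, K.map π = ⊤ → K = ⊤ ∨ ∃ i, K ≤ C i) (n : ℕ) :
    Nat.card {g : Fin n → G // Subgroup.closure (Set.range g) = ⊤}
      + Nat.card ι * Nat.card {h : Fin n → Q // Subgroup.closure (Set.range h) = ⊤}
    = Nat.card (MonoidHom.ker π) ^ n
      * Nat.card {h : Fin n → Q // Subgroup.closure (Set.range h) = ⊤} := by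
  classical
  -- key rewriting: closure of range of π ∘ g
  have key : ∀ g : Fin n → G,
      Subgroup.closure (Set.range (π ∘ g)) = (Subgroup.closure (Set.range g)).map π := by
    intro g
    rw [MonoidHom.map_closure, Set.range_comp]
  -- the section of π
  set s : Q → G := Function.surjInv hπ with hs_def
  have hs : ∀ q, π (s q) = q := Function.surjInv_eq hπ
  -- bijections C i ≃ Q
  have hfi : ∀ i, Function.Bijective (fun x : C i => π x) := by
    intro i
    constructor
    · intro x y hxy
      exact Subtype.ext (hCmono i x x.2 y y.2 hxy)
    · intro q
      have : q ∈ (C i).map π := by rw [hCtop i]; trivial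
      obtain ⟨x, hx, hxq⟩ := this
      exact ⟨⟨x, hx⟩, hxq⟩
  set e : ∀ i, C i ≃ Q := fun i => Equiv.ofBijective _ (hfi i) with he_def
  set si : ∀ i, Q → G := fun i q => ((e i).symm q : G) with hsi_def
  have hsi : ∀ i q, π (si i q) = q := fun i q => (e i).apply_symm_apply q
  have hsi_mem : ∀ i q, si i q ∈ C i := fun i q => ((e i).symm q).2
  have hsi_inv : ∀ i x (hx : x ∈ C i), si i (π x) = x := by
    intro i x hx
    have : (e i).symm ((e i) ⟨x, hx⟩) = ⟨x, hx⟩ := (e i).symm_apply_apply _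
    simpa [hsi_def, he_def] using congrArg Subtype.val this
  -- Step 1 : card A = card ker ^ n * card genQ
  have e1 : {g : Fin n → G // Subgroup.closure (Set.range (π ∘ g)) = ⊤}
      ≃ ({h : Fin n → Q // Subgroup.closure (Set.range h) = ⊤} × (Fin n → MonoidHom.ker π)) :=
    { toFun := fun a => ⟨⟨π ∘ a.1, a.2⟩,
        fun i => ⟨a.1 i * (s (π (a.1 i)))⁻¹, by
          simp [MonoidHom.mem_ker, hs]⟩⟩
      invFun := fun p => ⟨fun i => (p.2 i : G) * s (p.1.1 i), by
        have : (π ∘ fun i => (p.2 i : G) * s (p.1.1 i)) = p.1.1 := by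
          funext i
          have h1 : π (p.2 i : G) = 1 := (p.2 i).2
          simp [h1, hs]
        rw [this]
        exact p.1.2⟩
      left_inv := fun a => by
        apply Subtype.ext
        funext i
        simp
      right_inv := fun p => by
        have hfst : ∀ i, π ((p.2 i : G) * s (p.1.1 i)) = p.1.1 i := by
          intro i
          have h1 : π (p.2 i : G) = 1 := (p.2 i).2
          simp [h1, hs]
        refine Prod.ext (Subtype.ext (funext fun i => hfst i)) (funext fun i => Subtype.ext ?_)
        simp [hfst i] }
  -- Step 2 : partition
  set F : ({g : Fin n → G // Subgroup.closure (Set.range g) = ⊤}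
      ⊕ (ι × {h : Fin n → Q // Subgroup.closure (Set.range h) = ⊤}))
      → {g : Fin n → G // Subgroup.closure (Set.range (π ∘ g)) = ⊤} :=
    Sum.elim
      (fun g => ⟨g.1, by rw [key, g.2, Subgroup.map_top_of_surjective π hπ]⟩)
      (fun p => ⟨fun j => si p.1 (p.2.1 j), by
        have : (π ∘ fun j => si p.1 (p.2.1 j)) = p.2.1 := funext fun j => hsi _ _
        rw [this]
        exact p.2.2⟩) with hF_def
  have hFbij : Function.Bijective F := by
    constructor
    · rintro (g | ⟨i, h⟩) (g' | ⟨i', h'⟩) hgg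
      · rw [hF_def] at hgg
        simp only [Sum.elim_inl] at hgg
        have hv := congrArg Subtype.val hgg
        exact congrArg Sum.inl (Subtype.ext hv)
      · exfalso
        rw [hF_def] at hgg
        simp only [Sum.elim_inl, Sum.elim_inr] at hgg
        have hv : g.1 = fun j => si i' (h'.1 j) := congrArg Subtype.val hgg
        have hle : Subgroup.closure (Set.range g.1) ≤ C i' := by
          apply Subgroup.closure_le (C i') |>.2
          rintro x ⟨j, rfl⟩
          rw [hv]
          exact hsi_mem i' (h'.1 j)
        rw [g.2] at hle
        exact hCne i' (top_le_iff.mp hle)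
      · exfalso
        rw [hF_def] at hgg
        simp only [Sum.elim_inl, Sum.elim_inr] at hgg
        have hv : g'.1 = fun j => si i (h.1 j) := (congrArg Subtype.val hgg).symm
        have hle : Subgroup.closure (Set.range g'.1) ≤ C i := by
          apply Subgroup.closure_le (C i) |>.2
          rintro x ⟨j, rfl⟩
          rw [hv]
          exact hsi_mem i (h.1 j)
        rw [g'.2] at hle
        exact hCne i (top_le_iff.mp hle)
      · rw [hF_def] at hgg
        simp only [Sum.elim_inr] at hgg
        have hv : (fun j => si i (h.1 j)) = (fun j => si i' (h'.1 j)) :=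
          congrArg Subtype.val hgg
        have hh : h.1 = h'.1 := by
          funext j
          have := congrFun hv j
          calc h.1 j = π (si i (h.1 j)) := (hsi _ _).symm
            _ = π (si i' (h'.1 j)) := by rw [this]
            _ = h'.1 j := hsi _ _
        -- show i = i'
        set K := Subgroup.closure (Set.range fun j => si i (h.1 j)) with hK_def
        have hKC : K ≤ C i := by
          apply Subgroup.closure_le (C i) |>.2
          rintro x ⟨j, rfl⟩
          exact hsi_mem i (h.1 j)
        have hKC' : K ≤ C i' := by
          rw [hK_def, hv]
          apply Subgroup.closure_le (C i') |>.2
          rintro x ⟨j, rfl⟩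
          exact hsi_mem i' (h'.1 j)
        have hKtop : K.map π = ⊤ := by
          rw [hK_def, ← key]
          have : (π ∘ fun j => si i (h.1 j)) = h.1 := funext fun j => hsi _ _
          rw [this]
          exact h.2
        have hcard : ∀ i'' (_ : K ≤ C i''), K = C i'' := by
          intro i'' hle
          apply Subgroup.eq_of_le_of_card_ge hle
          have h1 : Nat.card Q ≤ Nat.card K := by
            apply Nat.card_le_card_of_surjective (fun x : K => π x)
            intro q
            have : q ∈ K.map π := by rw [hKtop]; trivial
            obtain ⟨x, hx, hxq⟩ := this
            exact ⟨⟨x, hx⟩, hxq⟩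
          have h2 : Nat.card (C i'') ≤ Nat.card Q :=
            Nat.card_le_card_of_injective _ (hfi i'').1
          omega
        have : i = i' := hCinj (((hcard i hKC).symm.trans (hcard i' hKC')))
        subst this
        rw [Subtype.ext hh]
    · rintro ⟨a, ha⟩
      have hmap : (Subgroup.closure (Set.range a)).map π = ⊤ := by rw [← key]; exact ha
      rcases hclass _ hmap with hK | ⟨i, hKC⟩
      · exact ⟨Sum.inl ⟨a, hK⟩, by rw [hF_def]; exact Subtype.ext rfl⟩
      · refine ⟨Sum.inr ⟨i, ⟨π ∘ a, ha⟩⟩, ?_⟩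
        rw [hF_def]
        apply Subtype.ext
        funext j
        exact hsi_inv i (a j) (hKC (Subgroup.subset_closure (Set.mem_range_self j)))
  have hcardA := Nat.card_eq_of_bijective F hFbij
  rw [Nat.card_sum, Nat.card_prod] at hcardA
  rw [Nat.card_congr e1, Nat.card_prod, Nat.card_fun, Nat.card_eq_fintype_card (α := Fin n),
    Fintype.card_fin] at hcardA
  ring_nf at hcardA ⊢
  omega


open Equiv Equiv.Perm Subgroup

/-- The three double transpositions in `S₄`. -/
def vK : Fin 3 → Perm (Fin 4) := ![swap 0 1 * swap 2 3, swap 0 2 * swap 1 3, swap 0 3 * swap 1 2]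

/-- The conjugation action of `S₄` on the three double transpositions, as indices. -/
def pf (σ : Perm (Fin 4)) (j : Fin 3) : Fin 3 :=
  if σ (vK j (σ⁻¹ 0)) = 1 then 0 else if σ (vK j (σ⁻¹ 0)) = 2 then 1 else 2

theorem pf_conj : ∀ σ j, σ * vK j * σ⁻¹ = vK (pf σ j) := by decide
theorem pf_invol : ∀ σ j, pf σ⁻¹ (pf σ j) = j := by decide
theorem pf_one : ∀ j, pf 1 j = j := by decide
theorem pf_mul : ∀ σ τ j, pf (σ * τ) j = pf σ (pf τ j) := by decide

def pe (σ : Perm (Fin 4)) : Perm (Fin 3) where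
  toFun := pf σ
  invFun := pf σ⁻¹
  left_inv := fun j => pf_invol σ j
  right_inv := fun j => by simpa using pf_invol σ⁻¹ j

/-- The projection `S₄ → S₃`. -/
def pi4 : Perm (Fin 4) →* Perm (Fin 3) where
  toFun := pe
  map_one' := Equiv.ext fun j => pf_one j
  map_mul' := fun σ τ => Equiv.ext fun j => pf_mul σ τ j

theorem pi4_surj : Function.Surjective pi4 := by
  have : ∀ q : Perm (Fin 3), ∃ x : Perm (Fin 4), pe x = q := by decide
  exact this

/-- The 3-cycle `(0 1 2)` in `S₃`. -/
def rC : Perm (Fin 3) := swap 0 1 * swap 1 2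

def wK : Fin 2 → Perm (Fin 3) := ![rC, rC * rC]

def pf2 (σ : Perm (Fin 3)) (j : Fin 2) : Fin 2 :=
  if σ (wK j (σ⁻¹ 0)) = 1 then 0 else 1

theorem pf2_invol : ∀ σ j, pf2 σ⁻¹ (pf2 σ j) = j := by decide
theorem pf2_one : ∀ j, pf2 1 j = j := by decide
theorem pf2_mul : ∀ σ τ j, pf2 (σ * τ) j = pf2 σ (pf2 τ j) := by decide

def pe2 (σ : Perm (Fin 3)) : Perm (Fin 2) where
  toFun := pf2 σ
  invFun := pf2 σ⁻¹
  left_inv := fun j => pf2_invol σ j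
  right_inv := fun j => by simpa using pf2_invol σ⁻¹ j

/-- The sign map `S₃ → S₂`. -/
def pi2 : Perm (Fin 3) →* Perm (Fin 2) where
  toFun := pe2
  map_one' := Equiv.ext fun j => pf2_one j
  map_mul' := fun σ τ => Equiv.ext fun j => pf2_mul σ τ j

theorem pi2_surj : Function.Surjective pi2 := by
  have : ∀ q : Perm (Fin 2), ∃ x : Perm (Fin 3), pe2 x = q := by decide
  exact this

theorem mem_ker_pi4 (x : Perm (Fin 4)) : x ∈ MonoidHom.ker pi4 ↔ ∀ j, pf x j = j := by
  rw [MonoidHom.mem_ker, Equiv.ext_iff]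
  exact Iff.rfl

theorem mem_ker_pi2 (x : Perm (Fin 3)) : x ∈ MonoidHom.ker pi2 ↔ ∀ j, pf2 x j = j := by
  rw [MonoidHom.mem_ker, Equiv.ext_iff]
  exact Iff.rfl

theorem card_ker_pi4 : Nat.card (MonoidHom.ker pi4) = 4 := by
  rw [Nat.card_congr (Equiv.subtypeEquivRight mem_ker_pi4), Nat.card_eq_fintype_card]
  decide

theorem card_ker_pi2 : Nat.card (MonoidHom.ker pi2) = 3 := by
  rw [Nat.card_congr (Equiv.subtypeEquivRight mem_ker_pi2), Nat.card_eq_fintype_card]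
  decide

-- ### decidable facts in S₄
theorem pow12 : ∀ x : Perm (Fin 4), x ^ 12 = 1 := by decide

theorem cy4 : (pe (swap 0 1 * swap 1 2)) ^ 4 = pe (swap 0 1 * swap 1 2) ∧
    pe (swap 0 1 * swap 1 2) ≠ 1 := by decide

theorem fix3 : ∀ x : Perm (Fin 4), x ^ 3 = 1 → x ≠ 1 →
    ∃ p, x p = p ∧ ∀ q, x q = q → q = p := by decide

theorem vstep : ∀ σ τ : Perm (Fin 4), ∀ p q : Fin 4, σ ^ 3 = 1 → τ ^ 3 = 1 → σ ≠ 1 → τ ≠ 1 →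
    σ p = p → τ q = q → p ≠ q →
    ∃ j, σ * τ = vK j ∨ σ * τ * τ = vK j ∨ σ * σ * τ = vK j ∨ σ * σ * τ * τ = vK j := by decide

theorem ker4_elts : ∀ x : Perm (Fin 4), (∀ j, pf x j = j) →
    x = 1 ∨ x = vK 0 ∨ x = vK 1 ∨ x = vK 2 := by decide

/-- Classification: subgroups of `S₄` surjecting onto `S₃` are `⊤` or point stabilizers. -/
theorem class4 (K : Subgroup (Perm (Fin 4))) (hK : K.map pi4 = ⊤) :
    K = ⊤ ∨ ∃ i : Fin 4, K ≤ MulAction.stabilizer (Perm (Fin 4)) i := by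
  have hmem : ∀ q : Perm (Fin 3), ∃ k ∈ K, pi4 k = q := by
    intro q
    have : q ∈ K.map pi4 := by rw [hK]; trivial
    obtain ⟨x, hx, hxq⟩ := this
    exact ⟨x, hx, hxq⟩
  obtain ⟨k₀, hk₀K, hk₀⟩ := hmem (pe (swap 0 1 * swap 1 2))
  set σ := k₀ ^ 4 with hσ_def
  have hσK : σ ∈ K := pow_mem hk₀K 4
  have hσ3 : σ ^ 3 = 1 := by rw [hσ_def, ← pow_mul]; exact pow12 k₀
  have hσpi : pi4 σ = pe (swap 0 1 * swap 1 2) := by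
    rw [hσ_def, map_pow, hk₀]; exact cy4.1
  have hσne : σ ≠ 1 := by
    intro h
    rw [h, map_one] at hσpi
    exact cy4.2 hσpi.symm
  obtain ⟨p, hp, hpu⟩ := fix3 σ hσ3 hσne
  by_cases hstab : ∀ k ∈ K, k p = p
  · exact Or.inr ⟨p, fun k hk => by
      rw [MulAction.mem_stabilizer_iff, Equiv.Perm.smul_def]; exact hstab k hk⟩
  push_neg at hstab
  obtain ⟨k, hkK, hkp⟩ := hstab
  left
  set τ := k * σ * k⁻¹ with hτ_def
  have hτK : τ ∈ K := mul_mem (mul_mem hkK hσK) (inv_mem hkK)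
  have hτ3 : τ ^ 3 = 1 := by
    have h1 : τ ^ 3 = k * σ ^ 3 * k⁻¹ := by
      rw [hτ_def]
      simp only [pow_succ, pow_zero, one_mul, mul_assoc, inv_mul_cancel_left]
    rw [h1, hσ3, mul_one, mul_inv_cancel]
  have hτne : τ ≠ 1 := by
    intro h
    apply hσne
    have : σ = k⁻¹ * τ * k := by
      rw [hτ_def]
      simp [mul_assoc]
    rw [this, h, mul_one, inv_mul_cancel]
  have hτfix : τ (k p) = k p := by
    rw [hτ_def]
    simp [Equiv.Perm.mul_apply, hp]
  obtain ⟨j, hj⟩ := vstep σ τ p (k p) hσ3 hτ3 hσne hτne hp hτfix (fun h => hkp h.symm)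
  have hvj : vK j ∈ K := by
    rcases hj with h | h | h | h <;> rw [← h]
    · exact mul_mem hσK hτK
    · exact mul_mem (mul_mem hσK hτK) hτK
    · exact mul_mem (mul_mem hσK hσK) hτK
    · exact mul_mem (mul_mem (mul_mem hσK hσK) hτK) hτK
  have hvall : ∀ j' : Fin 3, vK j' ∈ K := by
    intro j'
    obtain ⟨k', hk'K, hk'⟩ := hmem (swap j j')
    have h1 : k' * vK j * k'⁻¹ = vK (pf k' j) := pf_conj k' j
    have h2 : pf k' j = j' := by
      have h3 : pi4 k' j = swap j j' j := by rw [hk']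
      rw [swap_apply_left] at h3
      exact h3
    rw [h2] at h1
    rw [← h1]
    exact mul_mem (mul_mem hk'K hvj) (inv_mem hk'K)
  have hker : MonoidHom.ker pi4 ≤ K := by
    intro x hx
    rcases ker4_elts x ((mem_ker_pi4 x).mp hx) with h | h | h | h
    · rw [h]; exact one_mem K
    all_goals rw [h]; exact hvall _
  have : K = Subgroup.comap pi4 (Subgroup.map pi4 K) := by
    rw [Subgroup.comap_map_eq, sup_eq_left.mpr hker]
  rw [this, hK, Subgroup.comap_top]

-- ### the stabilizer family in S₄
theorem stab_sep : ∀ i j : Fin 4, i ≠ j → ∃ x : Perm (Fin 4), x i = i ∧ x j ≠ j := by decide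
theorem stab_top : ∀ (i : Fin 4) (q : Perm (Fin 3)), ∃ x : Perm (Fin 4), x i = i ∧ pe x = q := by
  decide
theorem stab_mono : ∀ (i : Fin 4) (x y : Perm (Fin 4)), x i = i → y i = i → pe x = pe y →
    x = y := by decide
theorem stab_ne : ∀ i : Fin 4, ∃ x : Perm (Fin 4), x i ≠ i := by decide

-- ### the S₃ level
theorem odd_sq : ∀ t : Perm (Fin 3), pe2 t ≠ 1 → t * t = 1 := by decide
theorem odd_ne_one : ∀ t : Perm (Fin 3), pe2 t ≠ 1 → t ≠ 1 := by decide
theorem perm2_cases : ∀ a b : Perm (Fin 2), a ≠ 1 → b = 1 ∨ b = a := by decide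
theorem swap2_ne : (swap 0 1 : Perm (Fin 2)) ≠ 1 := by decide
theorem odd_exists_other : ∀ t : Perm (Fin 3), ∃ z : Perm (Fin 3), z ≠ 1 ∧ z ≠ t := by decide
theorem gen3 : ∀ t k : Perm (Fin 3), pe2 t ≠ 1 → k ≠ 1 → k ≠ t → ∀ g : Perm (Fin 3),
    ∃ a b c : Perm (Fin 3), (a = 1 ∨ a = t ∨ a = k) ∧ (b = 1 ∨ b = t ∨ b = k) ∧
      (c = 1 ∨ c = t ∨ c = k) ∧ g = a * b * c := by decide

/-- The index type of odd elements of `S₃`. -/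
def Odd3 : Type := {t : Perm (Fin 3) // pe2 t ≠ 1}

instance : Fintype Odd3 := by unfold Odd3; infer_instance

theorem card_odd3 : Nat.card Odd3 = 3 := by
  rw [Nat.card_eq_fintype_card]; decide

/-- The order-2 subgroup generated by an odd element of `S₃`. -/
def C2 (t : Odd3) : Subgroup (Perm (Fin 3)) where
  carrier := {1, t.1}
  one_mem' := Set.mem_insert 1 _
  mul_mem' := by
    rintro a b (rfl | ha) (rfl | hb)
    · simp
    · simp only [Set.mem_singleton_iff] at hb
      rw [hb, one_mul]; exact Set.mem_insert_iff.mpr (Or.inr rfl)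
    · simp only [Set.mem_singleton_iff] at ha
      rw [ha, mul_one]; exact Set.mem_insert_iff.mpr (Or.inr rfl)
    · simp only [Set.mem_singleton_iff] at ha hb
      rw [ha, hb, odd_sq t.1 t.2]; exact Set.mem_insert 1 _
  inv_mem' := by
    rintro a (rfl | ha)
    · simp
    · simp only [Set.mem_singleton_iff] at ha
      rw [ha, inv_eq_of_mul_eq_one_right (odd_sq t.1 t.2)]
      exact Set.mem_insert_iff.mpr (Or.inr rfl)

theorem mem_C2 (t : Odd3) (x : Perm (Fin 3)) : x ∈ C2 t ↔ x = 1 ∨ x = t.1 := Set.mem_insert_iff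

theorem C2_inj : Function.Injective C2 := by
  intro t t' h
  have h1 : t.1 ∈ C2 t' := by rw [← h]; exact (mem_C2 t t.1).mpr (Or.inr rfl)
  rcases (mem_C2 t' t.1).mp h1 with h2 | h2
  · exact absurd h2 (odd_ne_one t.1 t.2)
  · exact Subtype.ext h2

theorem C2_top (t : Odd3) : (C2 t).map pi2 = ⊤ := by
  rw [eq_top_iff]
  intro q _
  rcases perm2_cases (pe2 t.1) q t.2 with h | h
  · exact ⟨1, (mem_C2 t 1).mpr (Or.inl rfl), by rw [map_one, h]⟩
  · exact ⟨t.1, (mem_C2 t t.1).mpr (Or.inr rfl), h.symm⟩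

theorem C2_mono (t : Odd3) : ∀ x ∈ C2 t, ∀ y ∈ C2 t, pi2 x = pi2 y → x = y := by
  intro x hx y hy hxy
  rcases (mem_C2 t x).mp hx with rfl | rfl <;> rcases (mem_C2 t y).mp hy with rfl | rfl
  · rfl
  · rw [map_one] at hxy; exact absurd hxy.symm t.2
  · rw [map_one] at hxy; exact absurd hxy t.2
  · rfl

theorem C2_ne (t : Odd3) : C2 t ≠ ⊤ := by
  obtain ⟨z, hz1, hzt⟩ := odd_exists_other t.1
  intro h
  have : z ∈ C2 t := by rw [h]; trivial
  rcases (mem_C2 t z).mp this with h2 | h2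
  · exact hz1 h2
  · exact hzt h2

/-- Classification: subgroups of `S₃` surjecting onto `S₂` are `⊤` or order-2 subgroups. -/
theorem class3 (K : Subgroup (Perm (Fin 3))) (hK : K.map pi2 = ⊤) :
    K = ⊤ ∨ ∃ t : Odd3, K ≤ C2 t := by
  have hsw : (swap 0 1 : Perm (Fin 2)) ∈ K.map pi2 := by rw [hK]; trivial
  obtain ⟨t, htK, hts⟩ := hsw
  have ht_odd : pe2 t ≠ 1 := by
    intro h
    apply swap2_ne
    rw [← hts]
    exact h
  by_cases hsmall : ∀ k ∈ K, k = 1 ∨ k = t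
  · exact Or.inr ⟨⟨t, ht_odd⟩, fun k hk => (mem_C2 ⟨t, ht_odd⟩ k).mpr (hsmall k hk)⟩
  push_neg at hsmall
  obtain ⟨k, hkK, hk1, hkt⟩ := hsmall
  left
  rw [Subgroup.eq_top_iff']
  intro g
  obtain ⟨a, b, c, ha, hb, hc, hg⟩ := gen3 t k ht_odd hk1 hkt g
  have hmem : ∀ x : Perm (Fin 3), (x = 1 ∨ x = t ∨ x = k) → x ∈ K := by
    rintro x (rfl | rfl | rfl)
    · exact one_mem K
    · exact htK
    · exact hkK
  rw [hg]
  exact mul_mem (mul_mem (hmem a ha) (hmem b hb)) (hmem c hc)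

-- ### base case : S₂
theorem perm2_all : ∀ x : Perm (Fin 2), x ≠ 1 → ∀ g : Perm (Fin 2), g = 1 ∨ g = x := by decide
theorem bot_ne_top2 : (⊥ : Subgroup (Perm (Fin 2))) ≠ ⊤ := by
  intro h
  have : (swap 0 1 : Perm (Fin 2)) ∈ (⊥ : Subgroup (Perm (Fin 2))) := by rw [h]; trivial
  rw [Subgroup.mem_bot] at this
  exact swap2_ne this

theorem base_count (n : ℕ) :
    Nat.card {h : Fin n → Perm (Fin 2) // Subgroup.closure (Set.range h) = ⊤} + 1 = 2 ^ n := by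
  classical
  have hiff : ∀ h : Fin n → Perm (Fin 2),
      Subgroup.closure (Set.range h) = ⊤ ↔ ¬(h = fun _ => 1) := by
    intro h
    constructor
    · intro htop heq
      have hle : Subgroup.closure (Set.range h) ≤ ⊥ := by
        apply (Subgroup.closure_le _).mpr
        rintro x ⟨j, rfl⟩
        rw [heq]
        exact Subgroup.mem_bot.mpr rfl
      rw [htop] at hle
      exact bot_ne_top2 (le_antisymm hle bot_le).symm
    · intro hne
      have : ∃ i, h i ≠ 1 := by
        by_contra hc
        push_neg at hc
        exact hne (funext hc)
      obtain ⟨i, hi⟩ := this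
      rw [Subgroup.eq_top_iff']
      intro g
      rcases perm2_all (h i) hi g with rfl | rfl
      · exact one_mem _
      · exact Subgroup.subset_closure (Set.mem_range_self i)
  rw [Nat.card_congr (Equiv.subtypeEquivRight hiff)]
  have h1 := Nat.card_congr (Equiv.sumCompl (fun h : Fin n → Perm (Fin 2) => h = fun _ => 1))
  rw [Nat.card_sum] at h1
  have h2 : Nat.card {h : Fin n → Perm (Fin 2) // h = fun _ => 1} = 1 := by
    have : Unique {h : Fin n → Perm (Fin 2) // h = fun _ => 1} :=
      ⟨⟨⟨fun _ => 1, rfl⟩⟩, fun x => Subtype.ext (x.2.trans rfl)⟩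
    exact Nat.card_unique
  have h3 : Nat.card (Fin n → Perm (Fin 2)) = 2 ^ n := by
    rw [Nat.card_fun, Nat.card_eq_fintype_card (α := Fin n), Fintype.card_fin,
      Nat.card_eq_fintype_card]
    have : Fintype.card (Perm (Fin 2)) = 2 := by decide
    rw [this]
  omega


/-- The number of surjective homomorphisms from the free group `F_n` onto the symmetric
group `S₄` is `(2^n - 1)(3^n - 3)(4^n - 4)`. -/
theorem card_epi_freeGroup_sym4 (n : ℕ) (hn : 1 ≤ n) :
    Nat.card {ρ : FreeGroup (Fin n) →* Equiv.Perm (Fin 4) // Function.Surjective ρ} =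
      (2 ^ n - 1) * (3 ^ n - 3) * (4 ^ n - 4) := by
  classical
  have e0 : {g : Fin n → Perm (Fin 4) // Subgroup.closure (Set.range g) = ⊤}
      ≃ {ρ : FreeGroup (Fin n) →* Perm (Fin 4) // Function.Surjective ρ} :=
    (FreeGroup.lift).subtypeEquiv (fun g => by
      rw [← MonoidHom.range_eq_top, FreeGroup.range_lift_eq_closure])
  rw [← Nat.card_congr e0]
  -- the stabilizer family
  have hCinj4 : Function.Injective (fun i : Fin 4 => MulAction.stabilizer (Perm (Fin 4)) i) := by
    intro i j h
    by_contra hne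
    obtain ⟨x, hxi, hxj⟩ := stab_sep i j hne
    have hx : x ∈ MulAction.stabilizer (Perm (Fin 4)) i := by
      rw [MulAction.mem_stabilizer_iff, Equiv.Perm.smul_def]; exact hxi
    have h' : MulAction.stabilizer (Perm (Fin 4)) i = MulAction.stabilizer (Perm (Fin 4)) j := h
    rw [h'] at hx
    rw [MulAction.mem_stabilizer_iff, Equiv.Perm.smul_def] at hx
    exact hxj hx
  have hCtop4 : ∀ i : Fin 4, (MulAction.stabilizer (Perm (Fin 4)) i).map pi4 = ⊤ := by
    intro i
    rw [eq_top_iff]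
    intro q _
    obtain ⟨x, hxi, hxq⟩ := stab_top i q
    rw [Subgroup.mem_map]
    exact ⟨x, by rw [MulAction.mem_stabilizer_iff, Equiv.Perm.smul_def]; exact hxi, hxq⟩
  have hCmono4 : ∀ i : Fin 4, ∀ x ∈ MulAction.stabilizer (Perm (Fin 4)) i,
      ∀ y ∈ MulAction.stabilizer (Perm (Fin 4)) i, pi4 x = pi4 y → x = y := by
    intro i x hx y hy hxy
    rw [MulAction.mem_stabilizer_iff, Equiv.Perm.smul_def] at hx hy
    exact stab_mono i x y hx hy hxy
  have hCne4 : ∀ i : Fin 4, MulAction.stabilizer (Perm (Fin 4)) i ≠ ⊤ := by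
    intro i h
    obtain ⟨x, hx⟩ := stab_ne i
    apply hx
    have : x ∈ MulAction.stabilizer (Perm (Fin 4)) i := by rw [h]; trivial
    rwa [MulAction.mem_stabilizer_iff, Equiv.Perm.smul_def] at this
  have A4 := gen_count pi4 pi4_surj _ hCinj4 hCtop4 hCmono4 hCne4 class4 n
  have A3 := gen_count pi2 pi2_surj C2 C2_inj C2_top C2_mono C2_ne class3 n
  have B2 := base_count n
  rw [card_ker_pi4, Nat.card_eq_fintype_card (α := Fin 4), Fintype.card_fin] at A4
  rw [card_ker_pi2, card_odd3] at A3
  set g4 := Nat.card {g : Fin n → Perm (Fin 4) // Subgroup.closure (Set.range g) = ⊤} with hg4_def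
  set g3 := Nat.card {g : Fin n → Perm (Fin 3) // Subgroup.closure (Set.range g) = ⊤} with hg3_def
  set g2 := Nat.card {g : Fin n → Perm (Fin 2) // Subgroup.closure (Set.range g) = ⊤} with hg2_def
  have hg2 : g2 = 2 ^ n - 1 := by omega
  have hg3 : g3 = (3 ^ n - 3) * g2 := by
    rw [Nat.sub_mul]
    omega
  have hg4 : g4 = (4 ^ n - 4) * g3 := by
    rw [Nat.sub_mul]
    omega
  rw [hg4, hg3, hg2]
  ring
end
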